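/- arXiv:math/0601099 — 7 statements merged into one kernel-verified Lean document; each statement's English description precedes it below -/
import Mathlib

section
/- Let (E, μ) be a measure space and let f and h be strictly positive integrable measurable functions on E such that u = log(f/h) is essentially bounded with ‖u‖_∞ ≤ B. Then the Kullback–Leibler distance satisfies the lower bound Δ(f; h) ≥ (1/2)·e^{−B}·∫_E f·(log(f/h))² dμ. -/
/-!
Put `u = log (f / h)`, so that `h = f e^{-u}` and the integrand of `Δ(f; h)` is
`f (e^{-u} - 1 + u)`. The theorem then follows by integrating, against `f`, the elementary
inequality `e^{-B} u² / 2 ≤ e^{-u} - 1 + u` for `|u| ≤ B`: for `u ≤ 0` it is the Taylor bound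
`1 + v + v² / 2 ≤ e^v` with `v = -u`, and for `u ≥ 0` it is `u² / 2 ≤ u e^u - e^u + 1`
multiplied by `e^{-u} ≥ e^{-B}`.
-/

open MeasureTheory Real

namespace Real

theorem hasDerivAt_mul_exp_sub_exp_sub_sq (t : ℝ) :
    HasDerivAt (fun t => t * exp t - exp t + 1 - t ^ 2 / 2) (t * (exp t - 1)) t := by
  have := ((((hasDerivAt_id t).mul (hasDerivAt_exp t)).sub (hasDerivAt_exp t)).add_const 1).sub
    ((hasDerivAt_pow 2 t).div_const 2)
  exact this.congr_deriv (by simp only [id, Nat.cast_ofNat]; ring)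

theorem sq_div_two_le_mul_exp_sub_exp_add_one {x : ℝ} (hx : 0 ≤ x) :
    x ^ 2 / 2 ≤ x * exp x - exp x + 1 := by
  have hmono : MonotoneOn (fun t => t * exp t - exp t + 1 - t ^ 2 / 2) (Set.Ici 0) := by
    refine monotoneOn_of_hasDerivWithinAt_nonneg (convex_Ici 0) ?_
      (fun t _ => (hasDerivAt_mul_exp_sub_exp_sub_sq t).hasDerivWithinAt) ?_
    · fun_prop
    · intro t ht
      rw [interior_Ici, Set.mem_Ioi] at ht
      exact mul_nonneg ht.le (sub_nonneg.2 (one_le_exp ht.le))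
  have := hmono Set.self_mem_Ici hx hx
  simp only [zero_mul, exp_zero] at this
  linarith

theorem exp_neg_mul_sq_div_two_le {B u : ℝ} (hu : |u| ≤ B) :
    exp (-B) * u ^ 2 / 2 ≤ exp (-u) - 1 + u := by
  rcases le_total 0 u with hu0 | hu0
  · have hB : exp (-B) ≤ exp (-u) := exp_le_exp.2 (neg_le_neg ((le_abs_self u).trans hu))
    calc exp (-B) * u ^ 2 / 2 ≤ exp (-u) * (u * exp u - exp u + 1) := by
          rw [mul_div_assoc]
          exact mul_le_mul hB (sq_div_two_le_mul_exp_sub_exp_add_one hu0) (by positivity)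
            (exp_pos _).le
      _ = exp (-u) - 1 + u := by
          rw [exp_neg]
          field_simp
          ring
  · have hB : exp (-B) ≤ 1 := exp_le_one_iff.2 (by linarith [abs_nonneg u])
    have := quadratic_le_exp_of_nonneg (neg_nonneg.2 hu0)
    rw [neg_sq] at this
    nlinarith [sq_nonneg u]

theorem mul_exp_neg_log_div {a b : ℝ} (ha : 0 < a) (hb : 0 < b) :
    a * exp (-log (a / b)) = b := by
  rw [exp_neg, exp_log (div_pos ha hb)]
  field_simp

end Real

/-- Lemma A.1, lower bound: for strictly positive integrable intensities `f, h` with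
`‖log(f/h)‖_∞ ≤ B`, the Kullback–Leibler distance
`Δ(f; h) = ∫ (f log(f/h) − f + h) dμ` satisfies
`Δ(f; h) ≥ (1/2)·e^{−B}·∫ f·(log(f/h))² dμ`. -/
theorem kl_lower_bound {E : Type*} [MeasurableSpace E] (μ : Measure E)
    (f h : E → ℝ) (hfm : Measurable f) (hhm : Measurable h)
    (hfpos : ∀ x, 0 < f x) (hhpos : ∀ x, 0 < h x)
    (hfint : Integrable f μ) (hhint : Integrable h μ)
    (B : ℝ) (hB : ∀ᵐ x ∂μ, |Real.log (f x / h x)| ≤ B) :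
    (1 / 2) * Real.exp (-B) * ∫ x, f x * (Real.log (f x / h x)) ^ 2 ∂μ ≤
      ∫ x, (f x * Real.log (f x / h x) - f x + h x) ∂μ := by
  set u : E → ℝ := fun x => log (f x / h x)
  have hum : AEStronglyMeasurable u μ := ((hfm.div hhm).log).aestronglyMeasurable
  have hfu : Integrable (fun x => f x * u x) μ := hfint.mul_bdd hum hB
  have hfu2 : Integrable (fun x => f x * u x ^ 2) μ := by
    refine hfint.mul_bdd (hum.pow 2) (c := B ^ 2) ?_
    filter_upwards [hB] with x hx
    rw [norm_pow, norm_eq_abs]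
    exact pow_le_pow_left₀ (abs_nonneg _) hx 2
  rw [← integral_const_mul]
  refine integral_mono_ae (hfu2.const_mul _) ((hfu.sub hfint).add hhint) ?_
  filter_upwards [hB] with x hx
  calc 1 / 2 * exp (-B) * (f x * u x ^ 2) = f x * (exp (-B) * u x ^ 2 / 2) := by ring
    _ ≤ f x * (exp (-u x) - 1 + u x) :=
        mul_le_mul_of_nonneg_left (exp_neg_mul_sq_div_two_le hx) (hfpos x).le
    _ = f x * u x - f x + f x * exp (-u x) := by ring
    _ = f x * u x - f x + h x := by rw [mul_exp_neg_log_div (hfpos x) (hhpos x)]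
end

section
/- Let (E, μ) be a measure space and let f and h be strictly positive integrable measurable functions on E such that u = log(f/h) is essentially bounded with ‖u‖_∞ ≤ B. Then the Kullback–Leibler distance satisfies the upper bound Δ(f; h) ≤ (1/2)·e^{B}·∫_E f·(log(f/h))² dμ. -/
/-! With `u = log (f / h)` we have `h = f e^{-u}`, so the integrand of `Δ(f; h)` is
`f (e^{-u} - 1 + u)`. The second-order Taylor bound `e^x - 1 - x ≤ x² / 2 · e^{|x|}` then gives
the claim pointwise, and it integrates because `u` is essentially bounded. -/

open MeasureTheory

namespace Real

theorem exp_le_quadratic_of_nonpos {x : ℝ} (hx : x ≤ 0) : exp x ≤ 1 + x + x ^ 2 / 2 := by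
  have hanti : Antitone fun t : ℝ => 1 + t + t ^ 2 / 2 - exp t := by
    refine antitone_of_hasDerivAt_nonpos (f' := fun t => 1 + t - exp t) (fun t => ?_) fun t => ?_
    · exact ((((hasDerivAt_id t).const_add 1).add ((hasDerivAt_pow 2 t).div_const 2)).sub
        (hasDerivAt_exp t)).congr_deriv (by simp)
    · exact sub_nonpos.2 (by linarith [add_one_le_exp t])
  simpa using hanti hx

theorem exp_sub_one_sub_le_of_nonneg {x : ℝ} (hx : 0 ≤ x) :
    exp x - 1 - x ≤ x ^ 2 / 2 * exp x := by
  -- Divided by `exp x`, the claim says that this function is at least its value `1` at `0`.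
  have hmono : Monotone fun t : ℝ => t ^ 2 / 2 + (1 + t) * exp (-t) := by
    refine monotone_of_hasDerivAt_nonneg (f' := fun t => t * (1 - exp (-t))) (fun t => ?_)
      fun t => ?_
    · exact (((hasDerivAt_pow 2 t).div_const 2).add (((hasDerivAt_id t).const_add 1).mul
        (hasDerivAt_neg t).exp)).congr_deriv (by simp; ring)
    · rcases le_total 0 t with ht | ht
      · exact mul_nonneg ht (sub_nonneg.2 (exp_le_one_iff.2 (by linarith)))
      · exact mul_nonneg_of_nonpos_of_nonpos ht (sub_nonpos.2 (one_le_exp (by linarith)))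
  have hmul := mul_le_mul_of_nonneg_right (hmono hx) (exp_pos x).le
  have hx' : exp (-x) * exp x = 1 := by rw [← exp_add, neg_add_cancel, exp_zero]
  simp only [pow_two, zero_mul, zero_div, add_zero, zero_add, one_mul, neg_zero, exp_zero] at hmul
  nlinarith

theorem exp_sub_one_sub_le_sq_mul_exp_abs (x : ℝ) : exp x - 1 - x ≤ x ^ 2 / 2 * exp |x| := by
  rcases le_total 0 x with hx | hx
  · simpa [abs_of_nonneg hx] using exp_sub_one_sub_le_of_nonneg hx
  · have : 1 ≤ exp |x| := one_le_exp (abs_nonneg x)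
    nlinarith [exp_le_quadratic_of_nonpos hx, sq_nonneg x]

theorem mul_log_div_sub_add_le {a b B : ℝ} (ha : 0 < a) (hb : 0 < b) (hB : |log (a / b)| ≤ B) :
    a * log (a / b) - a + b ≤ 1 / 2 * exp B * (a * log (a / b) ^ 2) := by
  set u := log (a / b)
  have hb : b = a * exp (-u) := by
    rw [exp_neg, exp_log (div_pos ha hb), inv_div, mul_div_cancel₀ _ ha.ne']
  have hexp := exp_sub_one_sub_le_sq_mul_exp_abs (-u)
  rw [abs_neg, neg_sq] at hexp
  calc a * u - a + b = a * (exp (-u) - 1 - -u) := by rw [hb]; ring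
    _ ≤ a * (u ^ 2 / 2 * exp |u|) := mul_le_mul_of_nonneg_left hexp ha.le
    _ ≤ a * (u ^ 2 / 2 * exp B) := by gcongr
    _ = 1 / 2 * exp B * (a * u ^ 2) := by ring

end Real

theorem kl_upper_bound_general {E : Type*} [MeasurableSpace E] (μ : Measure E)
    (f h : E → ℝ)
    (hfpos : ∀ x, 0 < f x) (hhpos : ∀ x, 0 < h x)
    (hfint : Integrable f μ) (hhint : Integrable h μ)
    (B : ℝ) (hB : ∀ᵐ x ∂μ, |Real.log (f x / h x)| ≤ B) :
    ∫ x, (f x * Real.log (f x / h x) - f x + h x) ∂μ ≤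
      (1 / 2) * Real.exp B * ∫ x, f x * (Real.log (f x / h x)) ^ 2 ∂μ := by
  set u := fun x => Real.log (f x / h x)
  have hu : AEStronglyMeasurable u μ :=
    (hfint.aemeasurable.div hhint.aemeasurable).log.aestronglyMeasurable
  have hfu : Integrable (fun x => f x * u x) μ := hfint.mul_bdd hu hB
  have hfu2 : Integrable (fun x => f x * u x ^ 2) μ :=
    hfint.mul_bdd (hu.pow 2) (c := B ^ 2) <| hB.mono fun x hx => by
      simpa only [norm_pow, Real.norm_eq_abs] using pow_le_pow_left₀ (abs_nonneg _) hx 2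
  rw [← integral_const_mul]
  exact integral_mono_ae ((hfu.sub hfint).add hhint) (hfu2.const_mul _) <|
    hB.mono fun x hx => Real.mul_log_div_sub_add_le (hfpos x) (hhpos x) hx

/-- Lemma A.1, upper bound: for strictly positive integrable intensities `f, h` with
`‖log(f/h)‖_∞ ≤ B`, the Kullback–Leibler distance
`Δ(f; h) = ∫ (f log(f/h) − f + h) dμ` satisfies
`Δ(f; h) ≤ (1/2)·e^{B}·∫ f·(log(f/h))² dμ`. -/
theorem kl_upper_bound {E : Type*} [MeasurableSpace E] (μ : Measure E)
    (f h : E → ℝ) (hfm : Measurable f) (hhm : Measurable h)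
    (hfpos : ∀ x, 0 < f x) (hhpos : ∀ x, 0 < h x)
    (hfint : Integrable f μ) (hhint : Integrable h μ)
    (B : ℝ) (hB : ∀ᵐ x ∂μ, |Real.log (f x / h x)| ≤ B) :
    ∫ x, (f x * Real.log (f x / h x) - f x + h x) ∂μ ≤
      (1 / 2) * Real.exp B * ∫ x, f x * (Real.log (f x / h x)) ^ 2 ∂μ :=
  kl_upper_bound_general μ f h hfpos hhpos hfint hhint B hB
end

section
/- For all θ₀, θ ∈ ℝ^Λ, with b = exp(‖log f_{θ₀}‖_∞), the Kullback–Leibler distance within the exponential family satisfies the lower bound Δ(f_{θ₀}; f_{θ}) ≥ (1/(2b))·e^{−A‖θ₀−θ‖₂}·‖θ₀ − θ‖₂². -/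
/-!
Put `g = log f_{θ₀} − log f_θ = ∑ (θ₀ − θ)_λ ψ_λ`. Pointwise the Kullback–Leibler integrand is
`f_{θ₀} · (g − 1 + e^{−g})`, and `g − 1 + e^{−g} ≥ (g²/2) e^{−|g|}` (Taylor with remainder
`e^{−ξ} g²/2`, `|ξ| ≤ |g|`). Bounding `f_{θ₀} ≥ 1/b` and `|g| ≤ A ‖g‖_{L²}` and integrating gives
the claim, since by orthonormality `‖g‖²_{L²} = ‖θ₀ − θ‖₂²`.
-/

open MeasureTheory Real

namespace Real

lemma sq_div_two_le_sub_one_mul_exp_add_one {t : ℝ} (ht : 0 ≤ t) :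
    t ^ 2 / 2 ≤ (t - 1) * exp t + 1 := by
  rcases le_or_gt t 1 with ht1 | ht1
  · -- `t - 1 ≤ 0`, so an upper bound on `exp t` is needed
    have hb := exp_bound (x := t) (by rwa [abs_of_nonneg ht]) (n := 3) (by norm_num)
    simp only [Finset.sum_range_succ, Finset.sum_range_zero, Nat.factorial, abs_of_nonneg ht]
      at hb
    have hupper := (abs_le.1 hb).2
    norm_num at hupper
    nlinarith [pow_nonneg ht 3, mul_nonneg (pow_nonneg ht 3) (sub_nonneg.2 ht1)]
  · have hlower := sum_le_exp_of_nonneg ht 3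
    simp only [Finset.sum_range_succ, Finset.sum_range_zero, Nat.factorial] at hlower
    norm_num at hlower
    nlinarith [pow_nonneg ht 3]

lemma sq_div_two_mul_exp_neg_abs_le (t : ℝ) : t ^ 2 / 2 * exp (-|t|) ≤ t - 1 + exp (-t) := by
  rcases le_or_gt 0 t with ht | ht
  · rw [abs_of_nonneg ht, exp_neg, ← div_eq_mul_inv, div_le_iff₀ (exp_pos t)]
    have := sq_div_two_le_sub_one_mul_exp_add_one ht
    field_simp
    nlinarith [exp_pos t]
  · rw [abs_of_neg ht, neg_neg]
    have hlower := sum_le_exp_of_nonneg (neg_nonneg.2 ht.le) 3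
    simp only [Finset.sum_range_succ, Finset.sum_range_zero, Nat.factorial] at hlower
    norm_num at hlower
    have hexp : exp t ≤ 1 := exp_le_one_iff.2 ht.le
    nlinarith [mul_le_mul_of_nonneg_left hexp (sq_nonneg t)]

lemma exp_mul_log_exp_div_exp_sub_add (u v : ℝ) :
    exp u * log (exp u / exp v) - exp u + exp v = exp u * (u - v - 1 + exp (-(u - v))) := by
  rw [← exp_sub, log_exp, mul_add, ← exp_add]
  ring_nf

lemma div_mul_exp_neg_mul_sq_le {u g M R : ℝ} (hu : |u| ≤ M) (hg : |g| ≤ R) :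
    1 / (2 * exp M) * exp (-R) * g ^ 2 ≤ exp u * (g - 1 + exp (-g)) := by
  have hM : exp (-M) ≤ exp u := exp_le_exp.2 (neg_le_of_abs_le hu)
  have hR : exp (-R) ≤ exp (-|g|) := exp_le_exp.2 (neg_le_neg hg)
  calc 1 / (2 * exp M) * exp (-R) * g ^ 2 = exp (-M) * (g ^ 2 / 2 * exp (-R)) := by
        simp only [exp_neg]; ring
    _ ≤ exp u * (g ^ 2 / 2 * exp (-|g|)) := by gcongr
    _ ≤ exp u * (g - 1 + exp (-g)) := by gcongr; exact sq_div_two_mul_exp_neg_abs_le g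

lemma abs_exp_mul_sub_one_add_exp_neg_le {u g M R : ℝ} (hu : |u| ≤ M) (hg : |g| ≤ R) :
    |exp u * (g - 1 + exp (-g))| ≤ exp M * (R + 1 + exp R) := by
  have hgR := abs_le.1 hg
  have hexp : exp (-g) ≤ exp R := exp_le_exp.2 (by linarith)
  rw [abs_mul, abs_of_pos (exp_pos u)]
  gcongr
  · exact le_of_abs_le hu
  · exact abs_le.2 ⟨by linarith [exp_pos (-g)], by linarith⟩

end Real

section OrthonormalFamily

variable {E Λ : Type*} {ψ : Λ → E → ℝ}

lemma exists_abs_sum_mul_le [Fintype Λ] (hbdd : ∀ l, ∃ C : ℝ, ∀ x, |ψ l x| ≤ C) (c : Λ → ℝ) :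
    ∃ C, ∀ x, |∑ l, c l * ψ l x| ≤ C := by
  choose C hC using hbdd
  refine ⟨∑ l, |c l| * C l, fun x => (Finset.abs_sum_le_sum_abs _ _).trans ?_⟩
  gcongr with l
  rw [abs_mul]
  gcongr
  exact hC l x

lemma integrable_mul_of_bounded [MeasurableSpace E] {μ : Measure E} [IsFiniteMeasure μ]
    (hmeas : ∀ l, Measurable (ψ l))
    (hbdd : ∀ l, ∃ C : ℝ, ∀ x, |ψ l x| ≤ C) (l k : Λ) :
    Integrable (fun x => ψ l x * ψ k x) μ := by
  obtain ⟨Cl, hCl⟩ := hbdd l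
  obtain ⟨Ck, hCk⟩ := hbdd k
  refine .of_bound ((hmeas l).mul (hmeas k)).aestronglyMeasurable (Cl * Ck)
    (ae_of_all _ fun x => ?_)
  rw [Real.norm_eq_abs, abs_mul]
  exact mul_le_mul (hCl x) (hCk x) (abs_nonneg _) ((abs_nonneg _).trans (hCl x))

lemma integral_sq_sum_mul_of_orthonormal [MeasurableSpace E] {μ : Measure E} [Fintype Λ]
    [DecidableEq Λ] (hint : ∀ l k, Integrable (fun x => ψ l x * ψ k x) μ)
    (horth : ∀ l k, ∫ x, ψ l x * ψ k x ∂μ = if l = k then (1 : ℝ) else 0) (c : Λ → ℝ) :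
    ∫ x, (∑ l, c l * ψ l x) ^ 2 ∂μ = ∑ l, c l ^ 2 := by
  have hexpand : ∀ x, (∑ l, c l * ψ l x) ^ 2 = ∑ l, ∑ k, c l * c k * (ψ l x * ψ k x) := by
    intro x
    rw [sq, Finset.sum_mul_sum]
    congr! 2 with l _ k _
    ring
  simp_rw [hexpand]
  rw [integral_finsetSum _ fun l _ => integrable_finsetSum _ fun k _ => (hint l k).const_mul _]
  simp_rw [integral_finsetSum _ fun k _ => (hint _ k).const_mul _, integral_const_mul, horth]
  simp [sq]

end OrthonormalFamily

theorem expFamily_kl_lower_bound_general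
    {E : Type*} [MeasurableSpace E] (μ : Measure E) [IsFiniteMeasure μ]
    {Λ : Type*} [Fintype Λ] [DecidableEq Λ] (ψ : Λ → E → ℝ)
    (hmeas : ∀ l, Measurable (ψ l))
    (hbdd : ∀ l, ∃ C : ℝ, ∀ x, |ψ l x| ≤ C)
    (horth : ∀ l k, ∫ x, ψ l x * ψ k x ∂μ = if l = k then (1 : ℝ) else 0)
    (A : ℝ)
    (hA : ∀ c : Λ → ℝ, ∀ x, |∑ l, c l * ψ l x| ≤
      A * Real.sqrt (∫ y, (∑ l, c l * ψ l y) ^ 2 ∂μ))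
    (θ₀ θ : Λ → ℝ) :
    (1 / (2 * Real.exp (⨆ x, |∑ l, θ₀ l * ψ l x|))) *
        Real.exp (-(A * Real.sqrt (∑ l, (θ₀ l - θ l) ^ 2))) * (∑ l, (θ₀ l - θ l) ^ 2) ≤
      ∫ x, (Real.exp (∑ l, θ₀ l * ψ l x) *
          Real.log (Real.exp (∑ l, θ₀ l * ψ l x) / Real.exp (∑ l, θ l * ψ l x)) -
          Real.exp (∑ l, θ₀ l * ψ l x) + Real.exp (∑ l, θ l * ψ l x)) ∂μ := by
  set M := ⨆ x, |∑ l, θ₀ l * ψ l x|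
  set R := A * sqrt (∑ l, (θ₀ l - θ l) ^ 2)
  have hnorm := integral_sq_sum_mul_of_orthonormal (integrable_mul_of_bounded hmeas hbdd) horth
    (fun l => θ₀ l - θ l)
  have hg (x : E) : |∑ l, (θ₀ l - θ l) * ψ l x| ≤ R := by
    simpa only [hnorm] using hA (fun l => θ₀ l - θ l) x
  have hu (x : E) : |∑ l, θ₀ l * ψ l x| ≤ M := by
    obtain ⟨C, hC⟩ := exists_abs_sum_mul_le hbdd θ₀
    exact le_ciSup ⟨C, Set.forall_mem_range.2 hC⟩ x
  have hdiff (x : E) : ∑ l, θ₀ l * ψ l x - ∑ l, θ l * ψ l x = ∑ l, (θ₀ l - θ l) * ψ l x := by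
    simp only [← Finset.sum_sub_distrib, sub_mul]
  simp_rw [exp_mul_log_exp_div_exp_sub_add, hdiff]
  have hint : Integrable (fun x => exp (∑ l, θ₀ l * ψ l x) *
      (∑ l, (θ₀ l - θ l) * ψ l x - 1 + exp (-∑ l, (θ₀ l - θ l) * ψ l x))) μ :=
    .of_bound (by fun_prop) _
      (ae_of_all _ fun x => abs_exp_mul_sub_one_add_exp_neg_le (hu x) (hg x))
  calc _ = ∫ x, 1 / (2 * exp M) * exp (-R) * (∑ l, (θ₀ l - θ l) * ψ l x) ^ 2 ∂μ := by
        rw [integral_const_mul, hnorm]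
    _ ≤ _ := integral_mono_of_nonneg (ae_of_all _ fun x => by positivity) hint
        (ae_of_all _ fun x => div_mul_exp_neg_mul_sq_le (hu x) (hg x))

/-- Lemma A.2, second assertion: with `b = exp(‖log f_{θ₀}‖_∞)`, the Kullback–Leibler
distance within the exponential family satisfies
`Δ(f_{θ₀}; f_θ) ≥ (1/(2b))·e^{−A‖θ₀−θ‖₂}·‖θ₀ − θ‖₂²`. -/
theorem expFamily_kl_lower_bound
    {E : Type*} [MeasurableSpace E] (μ : Measure E) [IsFiniteMeasure μ]
    {Λ : Type*} [Fintype Λ] [DecidableEq Λ] (ψ : Λ → E → ℝ)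
    (hmeas : ∀ l, Measurable (ψ l))
    (hbdd : ∀ l, ∃ C : ℝ, ∀ x, |ψ l x| ≤ C)
    (horth : ∀ l k, ∫ x, ψ l x * ψ k x ∂μ = if l = k then (1 : ℝ) else 0)
    (A : ℝ) (hApos : 0 < A)
    (hA : ∀ c : Λ → ℝ, ∀ x, |∑ l, c l * ψ l x| ≤
      A * Real.sqrt (∫ y, (∑ l, c l * ψ l y) ^ 2 ∂μ))
    (θ₀ θ : Λ → ℝ) :
    (1 / (2 * Real.exp (⨆ x, |∑ l, θ₀ l * ψ l x|))) *
        Real.exp (-(A * Real.sqrt (∑ l, (θ₀ l - θ l) ^ 2))) * (∑ l, (θ₀ l - θ l) ^ 2) ≤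
      ∫ x, (Real.exp (∑ l, θ₀ l * ψ l x) *
          Real.log (Real.exp (∑ l, θ₀ l * ψ l x) / Real.exp (∑ l, θ l * ψ l x)) -
          Real.exp (∑ l, θ₀ l * ψ l x) + Real.exp (∑ l, θ l * ψ l x)) ∂μ :=
  expFamily_kl_lower_bound_general μ ψ hmeas hbdd horth A hA θ₀ θ
end

section
/- Uniqueness of the information projection: let α ∈ ℝ^Λ and suppose there exists θ(α) ∈ ℝ^Λ such that ∫_E f_{θ(α)} ψ_λ dμ = α_λ for all λ ∈ Λ. Let f be a nonnegative integrable measurable function on E with ∫_E f·|log f| dμ < ∞ and ∫_E f ψ_λ dμ = α_λ for all λ ∈ Λ. Then for every θ ∈ ℝ^Λ such that f_θ is not μ-almost everywhere equal to f_{θ(α)}, one has Δ(f; f_θ) > Δ(f; f_{θ(α)}); that is, θ(α) uniquely minimizes θ ↦ Δ(f; f_θ) over ℝ^Λ. -/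
open MeasureTheory

/-- Uniqueness of the information projection (consequence of Lemma 3.1): if `θ(α)`
matches the moments `α`, `f` is nonnegative integrable with `∫ f·|log f| dμ < ∞` and the
same moments, then for every `θ` with `f_θ` not `μ`-a.e. equal to `f_{θ(α)}`,
`Δ(f; f_θ) > Δ(f; f_{θ(α)})`. -/
theorem information_projection_unique
    {E : Type*} [MeasurableSpace E] (μ : Measure E) [IsFiniteMeasure μ]
    {Λ : Type*} [Fintype Λ] [DecidableEq Λ] (ψ : Λ → E → ℝ)
    (hmeas : ∀ l, Measurable (ψ l))
    (hbdd : ∀ l, ∃ C : ℝ, ∀ x, |ψ l x| ≤ C)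
    (horth : ∀ l k, ∫ x, ψ l x * ψ k x ∂μ = if l = k then (1 : ℝ) else 0)
    (α : Λ → ℝ) (θα : Λ → ℝ)
    (hθα : ∀ l, ∫ x, Real.exp (∑ l', θα l' * ψ l' x) * ψ l x ∂μ = α l)
    (f : E → ℝ) (hfmeas : Measurable f) (hfnn : ∀ x, 0 ≤ f x)
    (hfint : Integrable f μ)
    (hflog : Integrable (fun x => f x * |Real.log (f x)|) μ)
    (hfmom : ∀ l, ∫ x, f x * ψ l x ∂μ = α l)
    (θ : Λ → ℝ)
    (hne : ¬ (∀ᵐ x ∂μ, Real.exp (∑ l, θ l * ψ l x) = Real.exp (∑ l, θα l * ψ l x))) :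
    (∫ x, (f x * Real.log (f x / Real.exp (∑ l, θα l * ψ l x)) - f x +
        Real.exp (∑ l, θα l * ψ l x)) ∂μ) <
      ∫ x, (f x * Real.log (f x / Real.exp (∑ l, θ l * ψ l x)) - f x +
        Real.exp (∑ l, θ l * ψ l x)) ∂μ := by
  classical
  set A : E → ℝ := fun x => ∑ l, θα l * ψ l x with hA
  set B : E → ℝ := fun x => ∑ l, θ l * ψ l x with hB
  have hAm : Measurable A := Finset.measurable_sum _ fun l _ => (hmeas l).const_mul _
  have hBm : Measurable B := Finset.measurable_sum _ fun l _ => (hmeas l).const_mul _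
  choose C hC using hbdd
  set KA : ℝ := ∑ l, |θα l| * C l with hKA
  set KB : ℝ := ∑ l, |θ l| * C l with hKB
  have hAb : ∀ x, |A x| ≤ KA := fun x => by
    calc |A x| ≤ ∑ l, |θα l * ψ l x| := Finset.abs_sum_le_sum_abs _ _
    _ ≤ KA := Finset.sum_le_sum fun l _ => by
        rw [abs_mul]; exact mul_le_mul_of_nonneg_left (hC l x) (abs_nonneg _)
  have hBb : ∀ x, |B x| ≤ KB := fun x => by
    calc |B x| ≤ ∑ l, |θ l * ψ l x| := Finset.abs_sum_le_sum_abs _ _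
    _ ≤ KB := Finset.sum_le_sum fun l _ => by
        rw [abs_mul]; exact mul_le_mul_of_nonneg_left (hC l x) (abs_nonneg _)
  -- integrability of the exponentials
  have hexpA : Integrable (fun x => Real.exp (A x)) μ := by
    refine (integrable_const (Real.exp KA)).mono' hAm.exp.aestronglyMeasurable
      (ae_of_all _ fun x => ?_)
    rw [Real.norm_eq_abs, abs_of_pos (Real.exp_pos _)]
    exact Real.exp_le_exp.2 ((le_abs_self _).trans (hAb x))
  have hexpB : Integrable (fun x => Real.exp (B x)) μ := by
    refine (integrable_const (Real.exp KB)).mono' hBm.exp.aestronglyMeasurable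
      (ae_of_all _ fun x => ?_)
    rw [Real.norm_eq_abs, abs_of_pos (Real.exp_pos _)]
    exact Real.exp_le_exp.2 ((le_abs_self _).trans (hBb x))
  -- integrability of f * ψ l and exp(A) * ψ l
  have hfψ : ∀ l, Integrable (fun x => f x * ψ l x) μ := fun l => by
    refine (hfint.const_mul (C l)).mono'
      (hfmeas.mul (hmeas l)).aestronglyMeasurable (ae_of_all _ fun x => ?_)
    rw [Real.norm_eq_abs, abs_mul, abs_of_nonneg (hfnn x), mul_comm (C l) (f x)]
    exact mul_le_mul_of_nonneg_left (hC l x) (hfnn x)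
  have hgψ : ∀ l, Integrable (fun x => Real.exp (A x) * ψ l x) μ := fun l => by
    refine (integrable_const (Real.exp KA * C l)).mono'
      (hAm.exp.mul (hmeas l)).aestronglyMeasurable (ae_of_all _ fun x => ?_)
    rw [Real.norm_eq_abs, abs_mul, abs_of_pos (Real.exp_pos _)]
    exact mul_le_mul (Real.exp_le_exp.2 ((le_abs_self _).trans (hAb x))) (hC l x)
      (abs_nonneg _) (Real.exp_pos _).le
  -- integrability of f * A and f * B, and their integrals
  have hfmul : ∀ (c : Λ → ℝ), Integrable (fun x => f x * ∑ l, c l * ψ l x) μ ∧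
      ∫ x, f x * ∑ l, c l * ψ l x ∂μ = ∑ l, c l * α l := by
    intro c
    have heq : (fun x => f x * ∑ l, c l * ψ l x)
        = fun x => ∑ l, c l * (f x * ψ l x) := by
      funext x; rw [Finset.mul_sum]; exact Finset.sum_congr rfl fun l _ => by ring
    constructor
    · rw [heq]; exact integrable_finset_sum _ fun l _ => (hfψ l).const_mul _
    · rw [heq, integral_finset_sum _ fun l _ => (hfψ l).const_mul _]
      exact Finset.sum_congr rfl fun l _ => by rw [integral_const_mul, hfmom l]
  have hgmul : ∀ (c : Λ → ℝ), Integrable (fun x => Real.exp (A x) * ∑ l, c l * ψ l x) μ ∧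
      ∫ x, Real.exp (A x) * ∑ l, c l * ψ l x ∂μ = ∑ l, c l * α l := by
    intro c
    have heq : (fun x => Real.exp (A x) * ∑ l, c l * ψ l x)
        = fun x => ∑ l, c l * (Real.exp (A x) * ψ l x) := by
      funext x; rw [Finset.mul_sum]; exact Finset.sum_congr rfl fun l _ => by ring
    constructor
    · rw [heq]; exact integrable_finset_sum _ fun l _ => (hgψ l).const_mul _
    · rw [heq, integral_finset_sum _ fun l _ => (hgψ l).const_mul _]
      exact Finset.sum_congr rfl fun l _ => by rw [integral_const_mul, hθα l]
  -- integrability of f * log f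
  have hflogf : Integrable (fun x => f x * Real.log (f x)) μ := by
    refine hflog.mono' (hfmeas.mul (Real.measurable_log.comp hfmeas)).aestronglyMeasurable
      (ae_of_all _ fun x => ?_)
    rw [Real.norm_eq_abs, abs_mul, abs_of_nonneg (hfnn x)]
  -- pointwise rewriting of the KL integrands
  have hpt : ∀ (D : E → ℝ) (x : E),
      f x * Real.log (f x / Real.exp (D x)) - f x + Real.exp (D x)
        = (f x * Real.log (f x) - f x * D x) - f x + Real.exp (D x) := by
    intro D x
    rcases eq_or_lt_of_le (hfnn x) with h | h
    · simp [← h]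
    · rw [Real.log_div (ne_of_gt h) (Real.exp_ne_zero _), Real.log_exp]; ring
  -- split the two KL integrals
  have hsplit : ∀ (D : E → ℝ), Integrable (fun x => f x * D x) μ →
      Integrable (fun x => Real.exp (D x)) μ →
      ∫ x, (f x * Real.log (f x / Real.exp (D x)) - f x + Real.exp (D x)) ∂μ
        = ∫ x, f x * Real.log (f x) ∂μ - ∫ x, f x * D x ∂μ - ∫ x, f x ∂μ
          + ∫ x, Real.exp (D x) ∂μ := by
    intro D hfD hexpD
    have h1 : Integrable (fun x => f x * Real.log (f x) - f x * D x) μ := hflogf.sub hfD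
    have h2 : Integrable (fun x => f x * Real.log (f x) - f x * D x - f x) μ := h1.sub hfint
    rw [integral_congr_ae (ae_of_all _ (hpt D))]
    rw [integral_add h2 hexpD, integral_sub h1 hfint, integral_sub hflogf hfD]
  have hsA := hsplit A (hfmul θα).1 hexpA
  have hsB := hsplit B (hfmul θ).1 hexpB
  -- the strictly positive KL divergence between the two exponential densities
  set F : E → ℝ := fun x =>
    Real.exp (A x) * (A x - B x) - Real.exp (A x) + Real.exp (B x) with hF
  have hkey : ∀ x, Real.exp (A x) * (B x - A x) + Real.exp (A x) ≤ Real.exp (B x) := by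
    intro x
    have h1 := Real.add_one_le_exp (B x - A x)
    have h2 : Real.exp (A x) * Real.exp (B x - A x) = Real.exp (B x) := by
      rw [← Real.exp_add]; ring_nf
    nlinarith [Real.exp_pos (A x)]
  have hFnn : ∀ x, 0 ≤ F x := fun x => by have := hkey x; simp only [hF]; linarith
  have hkeystrict : ∀ x, Real.exp (B x) ≠ Real.exp (A x) → 0 < F x := by
    intro x hx
    have hBA : B x - A x ≠ 0 := fun h => hx (by rw [sub_eq_zero] at h; rw [h])
    have h1 := Real.add_one_lt_exp hBA
    have h2 : Real.exp (A x) * Real.exp (B x - A x) = Real.exp (B x) := by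
      rw [← Real.exp_add]; ring_nf
    simp only [hF]
    nlinarith [Real.exp_pos (A x)]
  have hFint : Integrable F μ := by
    refine (integrable_const (Real.exp KA * (KA + KB) + Real.exp KA + Real.exp KB)).mono'
      (((hAm.exp.mul (hAm.sub hBm)).sub hAm.exp).add hBm.exp).aestronglyMeasurable
      (ae_of_all _ fun x => ?_)
    have e1 : Real.exp (A x) ≤ Real.exp KA :=
      Real.exp_le_exp.2 ((le_abs_self _).trans (hAb x))
    have e2 : Real.exp (B x) ≤ Real.exp KB :=
      Real.exp_le_exp.2 ((le_abs_self _).trans (hBb x))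
    have e3 : |A x - B x| ≤ KA + KB := (abs_sub _ _).trans (add_le_add (hAb x) (hBb x))
    simp only [Real.norm_eq_abs, hF]
    rw [abs_le]
    rw [abs_le] at e3
    constructor <;>
      nlinarith [Real.exp_pos (A x), Real.exp_pos (B x), e1, e2, e3.1, e3.2,
        (Real.exp_pos KA).le, (Real.exp_pos KB).le]
  have hFpos : 0 < ∫ x, F x ∂μ := by
    rw [integral_pos_iff_support_of_nonneg hFnn hFint]
    have hμ : μ {x | ¬ Real.exp (B x) = Real.exp (A x)} ≠ 0 := by
      rw [ae_iff] at hne; exact hne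
    have hsub : {x | ¬ Real.exp (B x) = Real.exp (A x)} ⊆ Function.support F :=
      fun x hx => ne_of_gt (hkeystrict x hx)
    exact lt_of_lt_of_le (zero_lt_iff.mpr hμ) (measure_mono hsub)
  -- compute ∫ F
  have hFeq : (fun x => F x)
      = fun x => Real.exp (A x) * ∑ l, (θα l - θ l) * ψ l x
        - Real.exp (A x) + Real.exp (B x) := by
    funext x
    have : A x - B x = ∑ l, (θα l - θ l) * ψ l x := by
      rw [hA, hB, ← Finset.sum_sub_distrib]
      exact Finset.sum_congr rfl fun l _ => by ring
    simp only [hF]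
    rw [this]
  have hFval : ∫ x, F x ∂μ = ∑ l, (θα l - θ l) * α l
      - ∫ x, Real.exp (A x) ∂μ + ∫ x, Real.exp (B x) ∂μ := by
    have h1 : Integrable (fun x => Real.exp (A x) * ∑ l, (θα l - θ l) * ψ l x
        - Real.exp (A x)) μ := (hgmul (fun l => θα l - θ l)).1.sub hexpA
    rw [hFeq, integral_add h1 hexpB,
      integral_sub (hgmul (fun l => θα l - θ l)).1 hexpA,
      (hgmul (fun l => θα l - θ l)).2]
  -- finish
  rw [hsA, hsB, (hfmul θα).2, (hfmul θ).2]
  have hsum : ∑ l, (θα l - θ l) * α l = ∑ l, θα l * α l - ∑ l, θ l * α l := by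
    rw [← Finset.sum_sub_distrib]; exact Finset.sum_congr rfl fun l _ => by ring
  rw [hFval, hsum] at hFpos
  linarith
end

section
/- Existence of the constrained exponential-family solution (Lemma 3.2, existence part): let θ₀ ∈ ℝ^Λ, set α_{0,λ} = ∫_E f_{θ₀} ψ_λ dμ for λ ∈ Λ, and let b = exp(‖log f_{θ₀}‖_∞) and e = exp(1). If α ∈ ℝ^Λ satisfies ‖α − α₀‖₂ ≤ 1/(2·e·b·A), then there exists θ(α) ∈ ℝ^Λ such that ∫_E f_{θ(α)} ψ_λ dμ = α_λ for all λ ∈ Λ. -/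
/-!
The solution is a minimiser of `g(θ) = ∫ f_θ dμ - ⟨α, θ⟩`, whose partial derivatives are
`∫ f_θ ψ_λ dμ - α_λ`. On the Euclidean ball `‖θ - θ₀‖₂ ≤ 1/A` the exponent of `f_θ / f_{θ₀}` is
bounded by `1` in sup norm, so `exp t ≥ 1 + t + e⁻¹ t² / 2` and orthonormality give
`g(θ) ≥ g(θ₀) - ‖α - α₀‖₂ ‖θ - θ₀‖₂ + ‖θ - θ₀‖₂² / (2 e b)`. On the boundary sphere the closeness
hypothesis makes the right-hand side at least `g(θ₀)`, so the minimum of `g` over the closed ball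
is also attained in the open ball, where the gradient vanishes.
-/

open MeasureTheory

namespace Real

theorem one_add_add_exp_neg_mul_sq_div_two_le_exp {M v : ℝ} (hv : |v| ≤ M) :
    1 + v + exp (-M) * v ^ 2 / 2 ≤ exp v := by
  have hM : 0 ≤ M := (abs_nonneg v).trans hv
  have hc : exp (-M) ≤ 1 := exp_le_one_iff.2 (neg_nonpos.2 hM)
  rcases le_total 0 v with hv0 | hv0
  · nlinarith [quadratic_le_exp_of_nonneg hv0, sq_nonneg v]
  let φ : ℝ → ℝ := fun t => exp t - 1 - t - exp (-M) * t ^ 2 / 2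
  have hφ' : ∀ t, HasDerivAt φ (exp t - 1 - exp (-M) * t) t := fun t => by
    refine ((((hasDerivAt_exp t).sub_const 1).sub (hasDerivAt_id t)).sub
      (((hasDerivAt_pow 2 t).const_mul (exp (-M))).div_const 2)).congr_deriv ?_
    norm_num
    ring
  have hφ : Differentiable ℝ φ := fun t => (hφ' t).differentiableAt
  -- On `[-M, 0]`: `exp t - 1 ≤ t * exp t ≤ t * exp (-M)`.
  have hanti : AntitoneOn φ (Set.Icc (-M) 0) := by
    refine antitoneOn_of_deriv_nonpos (convex_Icc _ _) hφ.continuous.continuousOn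
      hφ.differentiableOn fun t ht => ?_
    rw [interior_Icc] at ht
    have h1 : exp t * exp (-t) = 1 := by rw [← exp_add, add_neg_cancel, exp_zero]
    have h2 := mul_le_mul_of_nonneg_left (add_one_le_exp (-t)) (exp_pos t).le
    have h3 := mul_le_mul_of_nonpos_left (exp_le_exp.2 ht.1.le) ht.2.le
    rw [(hφ' t).deriv]
    nlinarith
  have := hanti ⟨neg_le_of_abs_le hv, hv0⟩ ⟨neg_nonpos.2 hM, le_rfl⟩ hv0
  simp [φ] at this
  linarith

end Real

theorem IsCompact.exists_isLocalMin_mem_open_of_le {α β : Type*} [TopologicalSpace β]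
    [LinearOrder α] [TopologicalSpace α] [ClosedIicTopology α] {f : β → α} {s t : Set β} {z : β}
    (ht : IsCompact t) (hst : s ⊆ t) (hf : ContinuousOn f t) (hz : z ∈ s)
    (hfz : ∀ z' ∈ t \ s, f z ≤ f z') (hs : IsOpen s) : ∃ x ∈ s, IsLocalMin f x := by
  obtain ⟨x, hxt, hx⟩ := ht.exists_isMinOn ⟨z, hst hz⟩ hf
  by_cases hxs : x ∈ s
  · exact ⟨x, hxs, hx.isLocalMin (mem_nhds_iff.2 ⟨s, hst, hs, hxs⟩)⟩
  · have hzmin : IsMinOn f t z := fun y hy => (hfz x ⟨hxt, hxs⟩).trans (hx hy)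
    exact ⟨z, hz, hzmin.isLocalMin (mem_nhds_iff.2 ⟨s, hst, hs, hz⟩)⟩

open Real Metric Filter Topology

theorem abs_sum_mul_le {E Λ : Type*} [Fintype Λ] {ψ : Λ → E → ℝ} {C : ℝ}
    (hψ : ∀ l x, |ψ l x| ≤ C) (θ : Λ → ℝ) (x : E) :
    |∑ l, θ l * ψ l x| ≤ ∑ l, |θ l| * C :=
  (Finset.abs_sum_le_sum_abs _ _).trans <| Finset.sum_le_sum fun l _ => by
    rw [abs_mul]; exact mul_le_mul_of_nonneg_left (hψ l x) (abs_nonneg _)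

section ExpFamily

variable {E : Type*} [MeasurableSpace E] {μ : Measure E} {Λ : Type*} [Fintype Λ]

theorem hasDerivAt_integral_exp_add_mul [IsFiniteMeasure μ] {a w : E → ℝ} {Ca Cw : ℝ}
    (ha : Measurable a) (hw : Measurable w) (haC : ∀ x, |a x| ≤ Ca) (hwC : ∀ x, |w x| ≤ Cw)
    (t₀ : ℝ) :
    HasDerivAt (fun t => ∫ x, exp (a x + t * w x) ∂μ) (∫ x, exp (a x + t₀ * w x) * w x ∂μ) t₀ := by
  set B := Ca + (|t₀| + 1) * Cw
  have hB : ∀ t ∈ ball t₀ 1, ∀ x, exp (a x + t * w x) ≤ exp B := fun t ht x => by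
    have ht : |t| ≤ |t₀| + 1 := by
      have := abs_sub_abs_le_abs_sub t t₀
      rw [mem_ball, Real.dist_eq] at ht
      linarith
    have htw : |t * w x| ≤ (|t₀| + 1) * Cw := by
      rw [abs_mul]
      exact mul_le_mul ht (hwC x) (abs_nonneg _) (by positivity)
    rw [exp_le_exp]
    linarith [le_abs_self (a x), le_abs_self (t * w x), haC x]
  refine (hasDerivAt_integral_of_dominated_loc_of_deriv_le (ball_mem_nhds t₀ one_pos)
    (F := fun t x => exp (a x + t * w x)) (F' := fun t x => exp (a x + t * w x) * w x)
    (bound := fun _ => exp B * Cw) (.of_forall fun t => by fun_prop) ?_ (by fun_prop)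
    (.of_forall fun x t ht => ?_) (integrable_const _)
    (.of_forall fun x t _ => ?_)).2
  · refine .of_bound (by fun_prop) (exp B) (.of_forall fun x => ?_)
    rw [norm_of_nonneg (exp_pos _).le]
    exact hB t₀ (mem_ball_self one_pos) x
  · rw [norm_mul, norm_of_nonneg (exp_pos _).le]
    exact mul_le_mul (hB t ht x) (hwC x) (norm_nonneg _) (exp_pos _).le
  · exact ((hasDerivAt_mul_const (w x)).const_add (a x)).exp

theorem le_integral_exp_add [IsFiniteMeasure μ] {s v : E → ℝ} {S M : ℝ} (hs : Measurable s)
    (hv : Measurable v) (hsS : ∀ x, |s x| ≤ S) (hvM : ∀ x, |v x| ≤ M) :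
    ∫ x, exp (s x) ∂μ + ∫ x, exp (s x) * v x ∂μ + exp (-M) * exp (-S) / 2 * ∫ x, v x ^ 2 ∂μ ≤
      ∫ x, exp (s x + v x) ∂μ := by
  have hint : ∀ {f : E → ℝ} (C : ℝ), Measurable f → (∀ x, |f x| ≤ C) → Integrable f μ :=
    fun C hf hC => .of_bound hf.aestronglyMeasurable C (.of_forall hC)
  have hexp : ∀ x, exp (s x) ≤ exp S := fun x => exp_le_exp.2 (le_of_abs_le (hsS x))
  have hint_exp : Integrable (fun x => exp (s x)) μ :=
    hint (exp S) (by fun_prop) fun x => by rw [abs_of_pos (exp_pos _)]; exact hexp x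
  have hint_mul : Integrable (fun x => exp (s x) * v x) μ :=
    hint (exp S * M) (by fun_prop) fun x => by
      rw [abs_mul, abs_of_pos (exp_pos _)]
      exact mul_le_mul (hexp x) (hvM x) (abs_nonneg _) (exp_pos _).le
  have hint_sq : Integrable (fun x => v x ^ 2) μ :=
    hint (M ^ 2) (by fun_prop) fun x => by
      rw [abs_pow]
      exact pow_le_pow_left₀ (abs_nonneg _) (hvM x) 2
  have hint_lin : Integrable (fun x => exp (s x) + exp (s x) * v x) μ := hint_exp.add hint_mul
  rw [← integral_add hint_exp hint_mul, ← integral_const_mul,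
    ← integral_add hint_lin (hint_sq.const_mul _)]
  refine integral_mono (hint_lin.add (hint_sq.const_mul _))
    (hint (exp (S + M)) (by fun_prop) fun x => ?_) fun x => ?_
  · rw [abs_of_pos (exp_pos _), exp_le_exp]
    linarith [le_of_abs_le (hsS x), le_of_abs_le (hvM x)]
  · have h1 := mul_le_mul_of_nonneg_left (one_add_add_exp_neg_mul_sq_div_two_le_exp (hvM x))
      (exp_pos (s x)).le
    have h2 := mul_le_mul_of_nonneg_right (exp_le_exp.2 (neg_le_of_abs_le (hsS x)))
      (by positivity : 0 ≤ exp (-M) * v x ^ 2 / 2)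
    simp only [exp_add]
    nlinarith

variable {ψ : Λ → E → ℝ}

theorem integral_sum_mul_sq_of_orthonormal [DecidableEq Λ] (hmeas : ∀ l, Measurable (ψ l))
    (horth : ∀ l k, ∫ x, ψ l x * ψ k x ∂μ = if l = k then (1 : ℝ) else 0) (c : Λ → ℝ) :
    ∫ x, (∑ l, c l * ψ l x) ^ 2 ∂μ = ∑ l, c l ^ 2 := by
  have hL2 : ∀ l, MemLp (ψ l) 2 μ := fun l =>
    (memLp_two_iff_integrable_sq (hmeas l).aestronglyMeasurable).2
      (.of_integral_ne_zero (by simp [sq, horth]))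
  have hint : ∀ l k, Integrable (fun x => c l * c k * (ψ l x * ψ k x)) μ := fun l k =>
    ((hL2 l).integrable_mul (hL2 k)).const_mul _
  have hexpand : ∀ x, (∑ l, c l * ψ l x) ^ 2 = ∑ l, ∑ k, c l * c k * (ψ l x * ψ k x) := fun x => by
    rw [sq, Finset.sum_mul_sum]
    exact Finset.sum_congr rfl fun l _ => Finset.sum_congr rfl fun k _ => by ring
  simp_rw [hexpand]
  rw [integral_finsetSum _ fun l _ => integrable_finsetSum _ fun k _ => hint l k]
  simp_rw [integral_finsetSum _ fun k _ => hint _ k, integral_const_mul, horth]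
  simp [sq]

theorem abs_sum_mul_le_of_orthonormal [DecidableEq Λ] {A : ℝ} (hmeas : ∀ l, Measurable (ψ l))
    (horth : ∀ l k, ∫ x, ψ l x * ψ k x ∂μ = if l = k then (1 : ℝ) else 0)
    (hA : ∀ c : Λ → ℝ, ∀ x, |∑ l, c l * ψ l x| ≤ A * √(∫ y, (∑ l, c l * ψ l y) ^ 2 ∂μ))
    (c : EuclideanSpace ℝ Λ) (x : E) : |∑ l, c l * ψ l x| ≤ A * ‖c‖ := by
  simpa [integral_sum_mul_sq_of_orthonormal hmeas horth, EuclideanSpace.norm_eq] using hA c x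

variable (μ ψ) in
noncomputable def momentObjective (α : Λ → ℝ) (θ : EuclideanSpace ℝ Λ) : ℝ :=
  ∫ x, exp (∑ l, θ l * ψ l x) ∂μ - ∑ l, α l * θ l

theorem continuous_momentObjective [IsFiniteMeasure μ] {C : ℝ} (hmeas : ∀ l, Measurable (ψ l))
    (hψ : ∀ l x, |ψ l x| ≤ C) (α : Λ → ℝ) : Continuous (momentObjective μ ψ α) := by
  refine .sub (continuous_iff_continuousAt.2 fun θ₁ => ?_) (by fun_prop)
  have hnear : ∀ᶠ θ in 𝓝 θ₁, ∀ l, |θ l| < |θ₁ l| + 1 := eventually_all.2 fun l =>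
    (by fun_prop : Continuous fun θ : EuclideanSpace ℝ Λ => |θ l|).continuousAt.eventually_lt
      continuousAt_const (lt_add_one _)
  refine continuousAt_of_dominated (bound := fun _ => exp (∑ l, (|θ₁ l| + 1) * C))
    (.of_forall fun θ => by fun_prop) (hnear.mono fun θ hθ => .of_forall fun x => ?_)
    (integrable_const _) (.of_forall fun x => by fun_prop)
  rw [norm_of_nonneg (exp_pos _).le, exp_le_exp]
  refine (le_abs_self _).trans ((abs_sum_mul_le hψ _ x).trans (Finset.sum_le_sum fun l _ => ?_))
  exact mul_le_mul_of_nonneg_right (hθ l).le ((abs_nonneg _).trans (hψ l x))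

theorem integral_exp_mul_eq_of_isLocalMin [IsFiniteMeasure μ] {C : ℝ}
    (hmeas : ∀ l, Measurable (ψ l)) (hψ : ∀ l x, |ψ l x| ≤ C) {α : Λ → ℝ}
    {θ : EuclideanSpace ℝ Λ} (hθ : IsLocalMin (momentObjective μ ψ α) θ) (l : Λ) :
    ∫ x, exp (∑ k, θ k * ψ k x) * ψ l x ∂μ = α l := by
  classical
  set e := EuclideanSpace.single l (1 : ℝ)
  have hline : (fun t : ℝ => momentObjective μ ψ α (θ + t • e)) =
      fun t => ∫ x, exp (∑ k, θ k * ψ k x + t * ψ l x) ∂μ - ∑ k, α k * θ k - t * α l := by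
    funext t
    simp [momentObjective, e, add_mul, mul_add, Finset.sum_add_distrib, PiLp.single_apply]
    ring
  have hderiv : HasDerivAt (fun t : ℝ => momentObjective μ ψ α (θ + t • e))
      ((∫ x, exp (∑ k, θ k * ψ k x + 0 * ψ l x) * ψ l x ∂μ) - α l) 0 := by
    rw [hline]
    exact ((hasDerivAt_integral_exp_add_mul (by fun_prop) (hmeas l) (abs_sum_mul_le hψ θ) (hψ l)
      0).sub_const _).sub (hasDerivAt_mul_const _)
  have hmin : IsLocalMin (fun t : ℝ => momentObjective μ ψ α (θ + t • e)) 0 := by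
    have : IsLocalMin (momentObjective μ ψ α) (θ + (0 : ℝ) • e) := by simpa using hθ
    exact this.comp_continuous (g := fun t : ℝ => θ + t • e) (by fun_prop)
  simpa [sub_eq_zero] using hmin.hasDerivAt_eq_zero hderiv

theorem le_momentObjective_add [IsFiniteMeasure μ] [DecidableEq Λ] {A C S : ℝ}
    (hmeas : ∀ l, Measurable (ψ l))
    (horth : ∀ l k, ∫ x, ψ l x * ψ k x ∂μ = if l = k then (1 : ℝ) else 0)
    (hsup : ∀ (c : EuclideanSpace ℝ Λ) x, |∑ l, c l * ψ l x| ≤ A * ‖c‖)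
    (hψ : ∀ l x, |ψ l x| ≤ C) (α : Λ → ℝ) {θ₀ : EuclideanSpace ℝ Λ}
    (hS : ∀ x, |∑ l, θ₀ l * ψ l x| ≤ S) {u : EuclideanSpace ℝ Λ} (hu : A * ‖u‖ ≤ 1) :
    momentObjective μ ψ α θ₀ -
        ∑ l, (α l - ∫ x, exp (∑ k, θ₀ k * ψ k x) * ψ l x ∂μ) * u l +
        exp (-1) * exp (-S) / 2 * ‖u‖ ^ 2 ≤
      momentObjective μ ψ α (θ₀ + u) := by
  have key := le_integral_exp_add (μ := μ) (s := fun x => ∑ l, θ₀ l * ψ l x)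
    (v := fun x => ∑ l, u l * ψ l x) (by fun_prop) (by fun_prop) hS
    fun x => (hsup u x).trans hu
  have hlin : ∫ x, exp (∑ k, θ₀ k * ψ k x) * ∑ l, u l * ψ l x ∂μ =
      ∑ l, (∫ x, exp (∑ k, θ₀ k * ψ k x) * ψ l x ∂μ) * u l := by
    simp_rw [Finset.mul_sum, mul_left_comm _ (u _)]
    rw [integral_finsetSum _ fun l _ => ?_]
    · simp_rw [integral_const_mul, mul_comm (u _)]
    refine (Integrable.of_bound (by fun_prop) (exp S * C) (.of_forall fun x => ?_)).const_mul _
    rw [norm_mul, norm_of_nonneg (exp_pos _).le]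
    exact mul_le_mul (exp_le_exp.2 (le_of_abs_le (hS x))) (hψ l x) (norm_nonneg _) (exp_pos _).le
  rw [hlin, integral_sum_mul_sq_of_orthonormal hmeas horth, ← EuclideanSpace.real_norm_sq_eq] at key
  simp only [momentObjective, PiLp.add_apply, add_mul, mul_add, sub_mul, Finset.sum_add_distrib,
    Finset.sum_sub_distrib]
  linarith

theorem momentObjective_le_of_mem_sphere [IsFiniteMeasure μ] [DecidableEq Λ] {A C S : ℝ}
    (hApos : 0 < A) (hmeas : ∀ l, Measurable (ψ l))
    (horth : ∀ l k, ∫ x, ψ l x * ψ k x ∂μ = if l = k then (1 : ℝ) else 0)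
    (hsup : ∀ (c : EuclideanSpace ℝ Λ) x, |∑ l, c l * ψ l x| ≤ A * ‖c‖)
    (hψ : ∀ l x, |ψ l x| ≤ C) {α : Λ → ℝ} {θ₀ : EuclideanSpace ℝ Λ}
    (hS : ∀ x, |∑ l, θ₀ l * ψ l x| ≤ S)
    (hα : √(∑ l, (α l - ∫ x, exp (∑ k, θ₀ k * ψ k x) * ψ l x ∂μ) ^ 2) ≤
      1 / (2 * exp 1 * exp S * A))
    {θ : EuclideanSpace ℝ Λ} (hθ : θ ∈ sphere θ₀ A⁻¹) :
    momentObjective μ ψ α θ₀ ≤ momentObjective μ ψ α θ := by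
  rw [mem_sphere, dist_eq_norm] at hθ
  have hbound := le_momentObjective_add hmeas horth hsup hψ α hS (u := θ - θ₀)
    (by rw [hθ, mul_inv_cancel₀ hApos.ne'])
  rw [add_sub_cancel, hθ] at hbound
  have hCS := Real.sum_mul_le_sqrt_mul_sqrt Finset.univ
    (fun l => α l - ∫ x, exp (∑ k, θ₀ k * ψ k x) * ψ l x ∂μ) (fun l => (θ - θ₀) l)
  have hnorm : √(∑ l, (θ - θ₀) l ^ 2) = A⁻¹ := by
    rw [← hθ, EuclideanSpace.norm_eq]
    simp only [Real.norm_eq_abs, sq_abs]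
  rw [hnorm] at hCS
  have hcoef : 1 / (2 * exp 1 * exp S * A) * A⁻¹ = exp (-1) * exp (-S) / 2 * A⁻¹ ^ 2 := by
    rw [exp_neg, exp_neg]
    field_simp
  nlinarith [mul_le_mul_of_nonneg_right hα (inv_nonneg.2 hApos.le)]

end ExpFamily

theorem information_projection_exists_general
    {E : Type*} [MeasurableSpace E] (μ : Measure E) [IsFiniteMeasure μ]
    {Λ : Type*} [Fintype Λ] [DecidableEq Λ] (ψ : Λ → E → ℝ)
    (hmeas : ∀ l, Measurable (ψ l))
    (horth : ∀ l k, ∫ x, ψ l x * ψ k x ∂μ = if l = k then (1 : ℝ) else 0)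
    (A : ℝ) (hApos : 0 < A)
    (hA : ∀ c : Λ → ℝ, ∀ x, |∑ l, c l * ψ l x| ≤
      A * Real.sqrt (∫ y, (∑ l, c l * ψ l y) ^ 2 ∂μ))
    (θ₀ : Λ → ℝ) (α : Λ → ℝ)
    (hclose : Real.sqrt (∑ l,
        (α l - ∫ x, Real.exp (∑ l', θ₀ l' * ψ l' x) * ψ l x ∂μ) ^ 2) ≤
      1 / (2 * Real.exp 1 * Real.exp (⨆ x, |∑ l, θ₀ l * ψ l x|) * A)) :
    ∃ θα : Λ → ℝ, (∀ l, ∫ x, Real.exp (∑ l', θα l' * ψ l' x) * ψ l x ∂μ = α l) := by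
  have hsup := abs_sum_mul_le_of_orthonormal hmeas horth hA
  have hψ : ∀ l x, |ψ l x| ≤ A := fun l x => by
    simpa [PiLp.single_apply] using hsup (EuclideanSpace.single l 1) x
  set θ₀' : EuclideanSpace ℝ Λ := WithLp.toLp 2 θ₀
  have hS : ∀ x, |∑ l, θ₀' l * ψ l x| ≤ ⨆ x, |∑ l, θ₀ l * ψ l x| := fun x =>
    le_ciSup ⟨A * ‖θ₀'‖, by rintro _ ⟨y, rfl⟩; exact hsup θ₀' y⟩ x
  obtain ⟨θ, -, hθ⟩ := (isCompact_closedBall θ₀' A⁻¹).exists_isLocalMin_mem_open_of_le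
    ball_subset_closedBall (continuous_momentObjective hmeas hψ α).continuousOn
    (mem_ball_self (inv_pos.2 hApos)) (fun θ hθ => momentObjective_le_of_mem_sphere hApos hmeas
      horth hsup hψ hS hclose (by rwa [← closedBall_sdiff_ball])) isOpen_ball
  exact ⟨θ, integral_exp_mul_eq_of_isLocalMin hmeas hψ hθ⟩

/-- Lemma 3.2, existence part: with `α_{0,λ} = ∫ f_{θ₀} ψ_λ dμ`,
`b = exp(‖log f_{θ₀}‖_∞)` and `e = exp 1`, if `‖α − α₀‖₂ ≤ 1/(2·e·b·A)` then there exists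
`θ(α)` with `∫ f_{θ(α)} ψ_λ dμ = α_λ` for all `λ`. -/
theorem information_projection_exists
    {E : Type*} [MeasurableSpace E] (μ : Measure E) [IsFiniteMeasure μ]
    {Λ : Type*} [Fintype Λ] [DecidableEq Λ] (ψ : Λ → E → ℝ)
    (hmeas : ∀ l, Measurable (ψ l))
    (hbdd : ∀ l, ∃ C : ℝ, ∀ x, |ψ l x| ≤ C)
    (horth : ∀ l k, ∫ x, ψ l x * ψ k x ∂μ = if l = k then (1 : ℝ) else 0)
    (A : ℝ) (hApos : 0 < A)
    (hA : ∀ c : Λ → ℝ, ∀ x, |∑ l, c l * ψ l x| ≤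
      A * Real.sqrt (∫ y, (∑ l, c l * ψ l y) ^ 2 ∂μ))
    (θ₀ : Λ → ℝ) (α : Λ → ℝ)
    (hclose : Real.sqrt (∑ l,
        (α l - ∫ x, Real.exp (∑ l', θ₀ l' * ψ l' x) * ψ l x ∂μ) ^ 2) ≤
      1 / (2 * Real.exp 1 * Real.exp (⨆ x, |∑ l, θ₀ l * ψ l x|) * A)) :
    ∃ θα : Λ → ℝ, (∀ l, ∫ x, Real.exp (∑ l', θα l' * ψ l' x) * ψ l x ∂μ = α l) :=
  information_projection_exists_general μ ψ hmeas horth A hApos hA θ₀ α hclose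
end

section
/- Lemma 3.2, inequality (3.1): let θ₀ ∈ ℝ^Λ, α_{0,λ} = ∫_E f_{θ₀} ψ_λ dμ, b = exp(‖log f_{θ₀}‖_∞), e = exp(1), and let α ∈ ℝ^Λ with ‖α − α₀‖₂ ≤ 1/(2·e·b·A). Then any θ(α) ∈ ℝ^Λ obtained as in Lemma 3.2 (i.e., with ‖θ(α) − θ₀‖₂ ≤ 2·e·b·‖α − α₀‖₂ being part of the construction) satisfies ∫_E f_{θ(α)} ψ_λ dμ = α_λ for all λ and ‖θ(α) − θ₀‖₂ ≤ 2·e·b·‖α − α₀‖₂; in particular there exists θ(α) ∈ ℝ^Λ satisfying both the moment equations and this norm bound. -/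
/-!
The moment map `θ ↦ ∫ f_θ ψ dμ` is the gradient of the convex function `θ ↦ ∫ f_θ dμ`. With
`M = ‖log f_{θ₀}‖_∞`, the bound `‖Σ c_λ ψ_λ‖_∞ ≤ A ‖c‖₂` keeps `log f_θ ≥ -(M + 1)` on the ball
`‖θ - θ₀‖₂ ≤ 1 / A`, and orthonormality gives `∫ (Σ c_λ ψ_λ)² dμ = ‖c‖₂²`; together they make the
moment map strongly monotone there with constant `e^{-(M+1)}`. Minimise `∫ f_θ dμ - ⟨α, θ⟩` over
the ball: testing the first-order condition at the minimiser against `θ₀` bounds its distance to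
`θ₀` by `e^{M+1} ‖α - α₀‖₂ < 1 / A`, so the minimiser is interior and its gradient vanishes.
-/

open MeasureTheory Real Metric InnerProductSpace
open scoped RealInnerProductSpace

theorem Real.exp_mul_sq_le_exp_sub_exp_mul_sub {m u v : ℝ} (hu : m ≤ u) (hv : m ≤ v) :
    exp m * (u - v) ^ 2 ≤ (exp u - exp v) * (u - v) := by
  wlog hvu : v ≤ u generalizing u v
  · have := this hv hu (le_of_not_ge hvu)
    nlinarith
  have hmv : exp m * (u - v) ≤ exp u - exp v :=
    calc exp m * (u - v) ≤ exp v * (u - v) := by gcongr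
      _ ≤ exp v * (exp (u - v) - 1) :=
        mul_le_mul_of_nonneg_left (by linarith [add_one_le_exp (u - v)]) (exp_pos v).le
      _ = exp u - exp v := by rw [mul_sub, ← exp_add]; ring_nf
  calc exp m * (u - v) ^ 2 = exp m * (u - v) * (u - v) := by ring
    _ ≤ (exp u - exp v) * (u - v) := by gcongr

section InnerProductSpace

variable {V : Type*} [NormedAddCommGroup V] [InnerProductSpace ℝ V]

theorem exp_inner_le {θ v : V} {R B : ℝ} (hθ : ‖θ‖ ≤ R) (hv : ‖v‖ ≤ B) :
    exp ⟪θ, v⟫ ≤ exp (R * B) :=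
  exp_le_exp.mpr <| (real_inner_le_norm θ v).trans
    (mul_le_mul hθ hv (norm_nonneg _) ((norm_nonneg θ).trans hθ))

theorem norm_le_of_forall_abs_inner_le {v : V} {A : ℝ} (hA : 0 ≤ A)
    (h : ∀ c, |⟪c, v⟫| ≤ A * ‖c‖) : ‖v‖ ≤ A := by
  have hv := h v
  rw [real_inner_self_eq_norm_sq, abs_of_nonneg (sq_nonneg _)] at hv
  nlinarith [norm_nonneg v]

theorem neg_le_inner_of_norm_sub_le {v θ θ₀ : V} {A M r : ℝ} (hv : ‖v‖ ≤ A)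
    (hM : |⟪θ₀, v⟫| ≤ M) (hθ : ‖θ - θ₀‖ ≤ r) : -(M + r * A) ≤ ⟪θ, v⟫ := by
  have hdiff : |⟪θ - θ₀, v⟫| ≤ r * A := (abs_real_inner_le_norm (θ - θ₀) v).trans
    (mul_le_mul hθ hv (norm_nonneg _) ((norm_nonneg _).trans hθ))
  rw [inner_sub_left] at hdiff
  linarith [neg_abs_le (⟪θ, v⟫ - ⟪θ₀, v⟫), neg_abs_le ⟪θ₀, v⟫]

variable [CompleteSpace V]

theorem HasGradientAt.sub_inner_const {f : V → ℝ} {g x : V} (hf : HasGradientAt f g x) (a : V) :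
    HasGradientAt (fun y => f y - ⟪a, y⟫) (g - a) x := by
  rw [hasGradientAt_iff_hasFDerivAt, map_sub]
  exact (hasGradientAt_iff_hasFDerivAt.mp hf).sub (innerSL ℝ a).hasFDerivAt

theorem IsMinOn.inner_gradient_sub_nonneg {f : V → ℝ} {s : Set V} {g x y : V}
    (hmin : IsMinOn f s x) (hs : Convex ℝ s) (hx : x ∈ s) (hy : y ∈ s)
    (hf : HasGradientAt f g x) : 0 ≤ ⟪g, y - x⟫ :=
  hmin.localize.hasFDerivWithinAt_nonneg
    (hasGradientAt_iff_hasFDerivAt.mp hf).hasFDerivWithinAt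
    (sub_mem_posTangentConeAt_of_segment_subset (hs.segment_subset hx hy))

theorem IsLocalMin.hasGradientAt_eq_zero {f : V → ℝ} {g x : V} (hmin : IsLocalMin f x)
    (hf : HasGradientAt f g x) : g = 0 := by
  have h := hmin.hasFDerivAt_eq_zero (hasGradientAt_iff_hasFDerivAt.mp hf)
  simpa using DFunLike.congr_fun h g

theorem norm_sub_le_of_isMinOn_of_strongMonotone {f : V → ℝ} {g : V → V} {s : Set V}
    {x x₀ a : V} {m : ℝ} (hm : 0 < m) (hs : Convex ℝ s) (hx : x ∈ s) (hx₀ : x₀ ∈ s)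
    (hmin : IsMinOn (fun y => f y - ⟪a, y⟫) s x) (hf : HasGradientAt f (g x) x)
    (hmono : m * ‖x - x₀‖ ^ 2 ≤ ⟪g x - g x₀, x - x₀⟫) :
    ‖x - x₀‖ ≤ ‖a - g x₀‖ / m := by
  have hvar := hmin.inner_gradient_sub_nonneg hs hx hx₀ (hf.sub_inner_const a)
  have key : m * ‖x - x₀‖ ^ 2 ≤ ‖a - g x₀‖ * ‖x - x₀‖ :=
    calc m * ‖x - x₀‖ ^ 2 ≤ ⟪g x - g x₀, x - x₀⟫ := hmono
      _ = -⟪g x - a, x₀ - x⟫ + ⟪a - g x₀, x - x₀⟫ := by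
        rw [← neg_sub x x₀, inner_neg_right, neg_neg, ← inner_add_left]; abel_nf
      _ ≤ ‖a - g x₀‖ * ‖x - x₀‖ := by linarith [real_inner_le_norm (a - g x₀) (x - x₀)]
  rw [le_div_iff₀' hm]
  rcases (norm_nonneg (x - x₀)).eq_or_lt with h | h
  · rw [← h, mul_zero]; exact norm_nonneg _
  · exact le_of_mul_le_mul_right (by nlinarith) h

theorem exists_gradient_eq_of_strongMonotone [ProperSpace V] {f : V → ℝ} {g : V → V}
    {x₀ a : V} {r m : ℝ} (hm : 0 < m)
    (hf : ∀ x ∈ closedBall x₀ r, HasGradientAt f (g x) x)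
    (hmono : ∀ x ∈ closedBall x₀ r, m * ‖x - x₀‖ ^ 2 ≤ ⟪g x - g x₀, x - x₀⟫)
    (ha : ‖a - g x₀‖ < m * r) :
    ∃ x, g x = a ∧ ‖x - x₀‖ ≤ ‖a - g x₀‖ / m := by
  have hr : 0 < r := pos_of_mul_pos_right ((norm_nonneg _).trans_lt ha) hm.le
  have hx₀ : x₀ ∈ closedBall x₀ r := mem_closedBall_self hr.le
  obtain ⟨x, hx, hmin⟩ := (isCompact_closedBall x₀ r).exists_isMinOn ⟨x₀, hx₀⟩
    (fun y hy => ((hf y hy).sub_inner_const a).continuousAt.continuousWithinAt)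
  have hdist := norm_sub_le_of_isMinOn_of_strongMonotone hm (convex_closedBall x₀ r) hx hx₀ hmin
    (hf x hx) (hmono x hx)
  have hball : x ∈ ball x₀ r := by
    rw [mem_ball, dist_eq_norm]
    exact hdist.trans_lt ((div_lt_iff₀' hm).mpr ha)
  have hloc := hmin.isLocalMin
    (Filter.mem_of_superset (isOpen_ball.mem_nhds hball) ball_subset_closedBall)
  exact ⟨x, sub_eq_zero.mp (hloc.hasGradientAt_eq_zero ((hf x hx).sub_inner_const a)), hdist⟩

end InnerProductSpace

section ExponentialFamily

variable {E V : Type*} [MeasurableSpace E] {μ : Measure E} [IsFiniteMeasure μ]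
  [NormedAddCommGroup V] [InnerProductSpace ℝ V] {Ψ : E → V} {B : ℝ}

noncomputable def innerMgf (μ : Measure E) (Ψ : E → V) (θ : V) : ℝ :=
  ∫ x, exp ⟪θ, Ψ x⟫ ∂μ

noncomputable def momentMap (μ : Measure E) (Ψ : E → V) (θ : V) : V :=
  ∫ x, exp ⟪θ, Ψ x⟫ • Ψ x ∂μ

theorem integrable_exp_inner_smul {F : Type*} [NormedAddCommGroup F] [NormedSpace ℝ F]
    (hΨ : AEStronglyMeasurable Ψ μ) (hB : ∀ x, ‖Ψ x‖ ≤ B) (θ : V) {h : E → F} {C : ℝ}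
    (hh : AEStronglyMeasurable h μ) (hC : ∀ x, ‖h x‖ ≤ C) :
    Integrable (fun x => exp ⟪θ, Ψ x⟫ • h x) μ := by
  refine Integrable.of_bound ?_ (exp (‖θ‖ * B) * C) (ae_of_all _ fun x => ?_)
  · exact (continuous_exp.comp_aestronglyMeasurable
      ((innerSL ℝ θ).continuous.comp_aestronglyMeasurable hΨ)).smul hh
  · rw [norm_smul, norm_of_nonneg (exp_pos _).le]
    exact mul_le_mul (exp_inner_le le_rfl (hB x)) (hC x) (norm_nonneg _) (exp_pos _).le

theorem integrable_exp_inner (hΨ : AEStronglyMeasurable Ψ μ) (hB : ∀ x, ‖Ψ x‖ ≤ B) (θ : V) :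
    Integrable (fun x => exp ⟪θ, Ψ x⟫) μ := by
  simpa using integrable_exp_inner_smul hΨ hB θ aestronglyMeasurable_const
    (h := fun _ => (1 : ℝ)) (C := 1) (by simp)

variable [CompleteSpace V]

theorem inner_momentMap (hΨ : AEStronglyMeasurable Ψ μ) (hB : ∀ x, ‖Ψ x‖ ≤ B) (θ v : V) :
    ⟪momentMap μ Ψ θ, v⟫ = ∫ x, exp ⟪θ, Ψ x⟫ * ⟪Ψ x, v⟫ ∂μ := by
  rw [momentMap, real_inner_comm, ← integral_inner (integrable_exp_inner_smul hΨ hB θ hΨ hB)]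
  simp_rw [inner_smul_right, real_inner_comm v]

theorem hasGradientAt_innerMgf (hΨ : AEStronglyMeasurable Ψ μ) (hB : ∀ x, ‖Ψ x‖ ≤ B) (θ : V) :
    HasGradientAt (innerMgf μ Ψ) (momentMap μ Ψ θ) θ := by
  have hderiv : ∀ x η, HasFDerivAt (fun η => exp ⟪η, Ψ x⟫)
      (exp ⟪η, Ψ x⟫ • innerSL ℝ (Ψ x)) η := fun x η => by
    simpa only [innerSL_apply_apply, real_inner_comm (Ψ x)] using
      (innerSL ℝ (Ψ x)).hasFDerivAt.exp
  have hnorm : ∀ x, ‖innerSL ℝ (Ψ x)‖ ≤ B :=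
    fun x => (innerSL_apply_norm ℝ (Ψ x)).trans_le (hB x)
  have hint := integrable_exp_inner_smul hΨ hB θ
    ((innerSL ℝ).continuous.comp_aestronglyMeasurable hΨ) hnorm
  have hgrad : toDual ℝ V (momentMap μ Ψ θ) = ∫ x, exp ⟪θ, Ψ x⟫ • innerSL ℝ (Ψ x) ∂μ := by
    ext v
    rw [ContinuousLinearMap.integral_apply hint, toDual_apply_apply, inner_momentMap hΨ hB]
    simp
  rw [hasGradientAt_iff_hasFDerivAt, hgrad]
  refine hasFDerivAt_integral_of_dominated_of_fderiv_le (ball_mem_nhds θ one_pos)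
    (Filter.Eventually.of_forall fun η => (integrable_exp_inner hΨ hB η).aestronglyMeasurable)
    (integrable_exp_inner hΨ hB θ) hint.aestronglyMeasurable
    (ae_of_all _ fun x η hη => ?_) (integrable_const (exp ((‖θ‖ + 1) * B) * B))
    (ae_of_all _ fun x η _ => hderiv x η)
  have hη : ‖η‖ ≤ ‖θ‖ + 1 := by
    linarith [norm_le_norm_add_norm_sub' η θ, mem_ball_iff_norm.mp hη]
  rw [norm_smul, norm_of_nonneg (exp_pos _).le]
  exact mul_le_mul (exp_inner_le hη (hB x)) (hnorm x) (norm_nonneg _) (exp_pos _).le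

theorem mul_norm_sub_sq_le_inner_momentMap_sub (hΨ : AEStronglyMeasurable Ψ μ)
    (hB : ∀ x, ‖Ψ x‖ ≤ B) (hframe : ∀ v, ‖v‖ ^ 2 ≤ ∫ x, ⟪v, Ψ x⟫ ^ 2 ∂μ) {θ η : V} {R : ℝ}
    (hθ : ∀ x, -R ≤ ⟪θ, Ψ x⟫) (hη : ∀ x, -R ≤ ⟪η, Ψ x⟫) :
    exp (-R) * ‖θ - η‖ ^ 2 ≤ ⟪momentMap μ Ψ θ - momentMap μ Ψ η, θ - η⟫ := by
  have hint : ∀ ζ : V, Integrable (fun x => exp ⟪ζ, Ψ x⟫ * ⟪Ψ x, θ - η⟫) μ := fun ζ =>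
    integrable_exp_inner_smul hΨ hB ζ
      (((innerSL ℝ (θ - η)).continuous.comp_aestronglyMeasurable hΨ).congr
        (ae_of_all _ fun x => real_inner_comm _ _))
      (fun x => (norm_inner_le_norm (Ψ x) (θ - η)).trans
        (mul_le_mul_of_nonneg_right (hB x) (norm_nonneg _)))
  have hpt : ∀ x, exp (-R) * ⟪θ - η, Ψ x⟫ ^ 2 ≤
      exp ⟪θ, Ψ x⟫ * ⟪Ψ x, θ - η⟫ - exp ⟪η, Ψ x⟫ * ⟪Ψ x, θ - η⟫ := fun x => by
    rw [← sub_mul, real_inner_comm (θ - η), inner_sub_left]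
    exact exp_mul_sq_le_exp_sub_exp_mul_sub (hθ x) (hη x)
  calc exp (-R) * ‖θ - η‖ ^ 2 ≤ exp (-R) * ∫ x, ⟪θ - η, Ψ x⟫ ^ 2 ∂μ := by gcongr; exact hframe _
    _ = ∫ x, exp (-R) * ⟪θ - η, Ψ x⟫ ^ 2 ∂μ := (integral_const_mul _ _).symm
    _ ≤ ∫ x, exp ⟪θ, Ψ x⟫ * ⟪Ψ x, θ - η⟫ - exp ⟪η, Ψ x⟫ * ⟪Ψ x, θ - η⟫ ∂μ :=
      integral_mono_of_nonneg (ae_of_all _ fun x => by positivity) ((hint θ).sub (hint η))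
        (ae_of_all _ hpt)
    _ = ⟪momentMap μ Ψ θ - momentMap μ Ψ η, θ - η⟫ := by
      rw [integral_sub (hint θ) (hint η), inner_sub_left, inner_momentMap hΨ hB,
        inner_momentMap hΨ hB]

end ExponentialFamily

section FeatureMap

variable {E Λ : Type*} {ψ : Λ → E → ℝ}

noncomputable def featureMap (ψ : Λ → E → ℝ) (x : E) : EuclideanSpace ℝ Λ :=
  WithLp.toLp 2 fun l => ψ l x

@[simp] theorem featureMap_apply (x : E) (l : Λ) : featureMap ψ x l = ψ l x := rfl

variable [Fintype Λ]

@[simp] theorem inner_featureMap (c : EuclideanSpace ℝ Λ) (x : E) :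
    ⟪c, featureMap ψ x⟫ = ∑ l, c l * ψ l x := by
  simp [featureMap, PiLp.inner_apply, mul_comm]

variable [MeasurableSpace E] {μ : Measure E}

theorem measurable_featureMap (hmeas : ∀ l, Measurable (ψ l)) : Measurable (featureMap ψ) :=
  (PiLp.continuous_toLp 2 _).measurable.comp (measurable_pi_lambda _ hmeas)

theorem abs_le_of_integral_sq_eq_one {A : ℝ} {l : Λ} (hl : ∫ x, ψ l x ^ 2 ∂μ = 1)
    (hA : ∀ c : Λ → ℝ, ∀ x, |∑ l, c l * ψ l x| ≤ A * sqrt (∫ y, (∑ l, c l * ψ l y) ^ 2 ∂μ))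
    (x : E) : |ψ l x| ≤ A := by
  classical
  simpa [Pi.single_apply, hl] using hA (Pi.single l 1) x

theorem integral_inner_featureMap_sq [IsFiniteMeasure μ] [DecidableEq Λ] {C : ℝ}
    (hmeas : ∀ l, Measurable (ψ l)) (hC : ∀ l x, |ψ l x| ≤ C)
    (horth : ∀ l k, ∫ x, ψ l x * ψ k x ∂μ = if l = k then (1 : ℝ) else 0)
    (c : EuclideanSpace ℝ Λ) : ∫ x, ⟪c, featureMap ψ x⟫ ^ 2 ∂μ = ‖c‖ ^ 2 := by
  have hint : ∀ l k, Integrable (fun x => c l * c k * (ψ l x * ψ k x)) μ := fun l k =>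
    (Integrable.of_bound ((hmeas l).mul (hmeas k)).aestronglyMeasurable (C * C)
      (ae_of_all _ fun x => by
        rw [Pi.mul_apply, norm_mul]
        exact mul_le_mul (hC l x) (hC k x) (norm_nonneg _)
          ((abs_nonneg _).trans (hC l x)))).const_mul _
  have hsq : ∀ x, ⟪c, featureMap ψ x⟫ ^ 2 = ∑ l, ∑ k, c l * c k * (ψ l x * ψ k x) := fun x => by
    rw [inner_featureMap, sq, Finset.sum_mul_sum]
    exact Finset.sum_congr rfl fun l _ => Finset.sum_congr rfl fun k _ => by ring
  simp_rw [hsq]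
  rw [integral_finsetSum _ fun l _ => integrable_finsetSum _ fun k _ => hint l k]
  simp_rw [integral_finsetSum _ fun k _ => hint _ k, integral_const_mul, horth]
  simp [EuclideanSpace.norm_sq_eq, ← sq]

theorem abs_inner_featureMap_le {A : ℝ} (hL2 : ∀ c, ∫ x, ⟪c, featureMap ψ x⟫ ^ 2 ∂μ = ‖c‖ ^ 2)
    (hA : ∀ c : Λ → ℝ, ∀ x, |∑ l, c l * ψ l x| ≤ A * sqrt (∫ y, (∑ l, c l * ψ l y) ^ 2 ∂μ))
    (c : EuclideanSpace ℝ Λ) (x : E) : |⟪c, featureMap ψ x⟫| ≤ A * ‖c‖ := by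
  rw [← sqrt_sq (norm_nonneg c), ← hL2 c]
  simpa only [inner_featureMap] using hA c.ofLp x

theorem momentMap_featureMap_apply [IsFiniteMeasure μ] (hmeas : ∀ l, Measurable (ψ l)) {B : ℝ}
    (hB : ∀ x, ‖featureMap ψ x‖ ≤ B) (θ : Λ → ℝ) (l : Λ) :
    momentMap μ (featureMap ψ) (WithLp.toLp 2 θ) l =
      ∫ x, exp (∑ l', θ l' * ψ l' x) * ψ l x ∂μ := by
  have hΨ : AEStronglyMeasurable (featureMap ψ) μ :=
    (measurable_featureMap hmeas).aestronglyMeasurable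
  rw [momentMap, eval_integral_piLp (integrable_exp_inner_smul hΨ hB _ hΨ hB).eval_piLp]
  simp

end FeatureMap

theorem information_projection_theta_bound_general
    {E : Type*} [MeasurableSpace E] (μ : Measure E) [IsFiniteMeasure μ]
    {Λ : Type*} [Fintype Λ] [DecidableEq Λ] (ψ : Λ → E → ℝ)
    (hmeas : ∀ l, Measurable (ψ l))
    (horth : ∀ l k, ∫ x, ψ l x * ψ k x ∂μ = if l = k then (1 : ℝ) else 0)
    (A : ℝ) (hApos : 0 < A)
    (hA : ∀ c : Λ → ℝ, ∀ x, |∑ l, c l * ψ l x| ≤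
      A * Real.sqrt (∫ y, (∑ l, c l * ψ l y) ^ 2 ∂μ))
    (θ₀ : Λ → ℝ) (α : Λ → ℝ)
    (hclose : Real.sqrt (∑ l,
        (α l - ∫ x, Real.exp (∑ l', θ₀ l' * ψ l' x) * ψ l x ∂μ) ^ 2) ≤
      1 / (2 * Real.exp 1 * Real.exp (⨆ x, |∑ l, θ₀ l * ψ l x|) * A)) :
    ∃ θα : Λ → ℝ, (∀ l, ∫ x, Real.exp (∑ l', θα l' * ψ l' x) * ψ l x ∂μ = α l) ∧
      Real.sqrt (∑ l, (θα l - θ₀ l) ^ 2) ≤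
        2 * Real.exp 1 * Real.exp (⨆ x, |∑ l, θ₀ l * ψ l x|) *
          Real.sqrt (∑ l,
            (α l - ∫ x, Real.exp (∑ l', θ₀ l' * ψ l' x) * ψ l x ∂μ) ^ 2) := by
  set M := ⨆ x, |∑ l, θ₀ l * ψ l x|
  set Ψ := featureMap ψ
  have hL2 := integral_inner_featureMap_sq hmeas
    (fun l => abs_le_of_integral_sq_eq_one (by simpa [sq] using horth l l) hA) horth
  have hinner := abs_inner_featureMap_le hL2 hA
  have hΨA : ∀ x, ‖Ψ x‖ ≤ A := fun x => norm_le_of_forall_abs_inner_le hApos.le (hinner · x)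
  have hΨ : AEStronglyMeasurable Ψ μ := (measurable_featureMap hmeas).aestronglyMeasurable
  have hM : ∀ x, |⟪WithLp.toLp 2 θ₀, Ψ x⟫| ≤ M := fun x => by
    simpa [Ψ] using le_ciSup ⟨_, Set.forall_mem_range.2 (hinner (WithLp.toLp 2 θ₀))⟩ x
  have hlow : ∀ θ ∈ closedBall (WithLp.toLp 2 θ₀) (1 / A), ∀ x, -(M + 1) ≤ ⟪θ, Ψ x⟫ :=
    fun θ hθ x => by
      simpa [hApos.ne'] using neg_le_inner_of_norm_sub_le (hΨA x) (hM x)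
        (mem_closedBall_iff_norm.mp hθ)
  have hδ : ‖WithLp.toLp 2 α - momentMap μ Ψ (WithLp.toLp 2 θ₀)‖ = sqrt (∑ l,
      (α l - ∫ x, Real.exp (∑ l', θ₀ l' * ψ l' x) * ψ l x ∂μ) ^ 2) := by
    simp [EuclideanSpace.norm_eq, Ψ, momentMap_featureMap_apply hmeas hΨA]
  obtain ⟨θ, hθ, hdist⟩ := exists_gradient_eq_of_strongMonotone (exp_pos (-(M + 1)))
    (fun θ _ => hasGradientAt_innerMgf hΨ hΨA θ)
    (fun θ hθ => mul_norm_sub_sq_le_inner_momentMap_sub hΨ hΨA (fun v => (hL2 v).ge)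
      (hlow θ hθ) (hlow _ (mem_closedBall_self (by positivity))))
    (a := WithLp.toLp 2 α) (by
      rw [hδ, exp_neg, exp_add]
      refine hclose.trans_lt ?_
      field_simp
      linarith [exp_pos 1, exp_pos M])
  refine ⟨θ.ofLp, fun l => by rw [← momentMap_featureMap_apply hmeas hΨA, hθ], ?_⟩
  calc sqrt (∑ l, (θ l - θ₀ l) ^ 2) = ‖θ - WithLp.toLp 2 θ₀‖ := by simp [EuclideanSpace.norm_eq]
    _ ≤ ‖WithLp.toLp 2 α - momentMap μ Ψ (WithLp.toLp 2 θ₀)‖ / exp (-(M + 1)) := hdist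
    _ = exp 1 * exp M * ‖WithLp.toLp 2 α - momentMap μ Ψ (WithLp.toLp 2 θ₀)‖ := by
      rw [exp_neg, div_inv_eq_mul, exp_add]; ring
    _ ≤ _ := by rw [hδ]; gcongr; linarith [exp_pos 1]

/-- Lemma 3.2, inequality (3.1): under `‖α − α₀‖₂ ≤ 1/(2·e·b·A)` there exists `θ(α)`
satisfying the moment equations and `‖θ(α) − θ₀‖₂ ≤ 2·e·b·‖α − α₀‖₂`. -/
theorem information_projection_theta_bound
    {E : Type*} [MeasurableSpace E] (μ : Measure E) [IsFiniteMeasure μ]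
    {Λ : Type*} [Fintype Λ] [DecidableEq Λ] (ψ : Λ → E → ℝ)
    (hmeas : ∀ l, Measurable (ψ l))
    (hbdd : ∀ l, ∃ C : ℝ, ∀ x, |ψ l x| ≤ C)
    (horth : ∀ l k, ∫ x, ψ l x * ψ k x ∂μ = if l = k then (1 : ℝ) else 0)
    (A : ℝ) (hApos : 0 < A)
    (hA : ∀ c : Λ → ℝ, ∀ x, |∑ l, c l * ψ l x| ≤
      A * Real.sqrt (∫ y, (∑ l, c l * ψ l y) ^ 2 ∂μ))
    (θ₀ : Λ → ℝ) (α : Λ → ℝ)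
    (hclose : Real.sqrt (∑ l,
        (α l - ∫ x, Real.exp (∑ l', θ₀ l' * ψ l' x) * ψ l x ∂μ) ^ 2) ≤
      1 / (2 * Real.exp 1 * Real.exp (⨆ x, |∑ l, θ₀ l * ψ l x|) * A)) :
    ∃ θα : Λ → ℝ, (∀ l, ∫ x, Real.exp (∑ l', θα l' * ψ l' x) * ψ l x ∂μ = α l) ∧
      Real.sqrt (∑ l, (θα l - θ₀ l) ^ 2) ≤
        2 * Real.exp 1 * Real.exp (⨆ x, |∑ l, θ₀ l * ψ l x|) *
          Real.sqrt (∑ l,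
            (α l - ∫ x, Real.exp (∑ l', θ₀ l' * ψ l' x) * ψ l x ∂μ) ^ 2) :=
  information_projection_theta_bound_general μ ψ hmeas horth A hApos hA θ₀ α hclose
end

section
/- Lemma 3.2, inequality (3.3): let θ₀ ∈ ℝ^Λ, α_{0,λ} = ∫_E f_{θ₀} ψ_λ dμ, b = exp(‖log f_{θ₀}‖_∞), e = exp(1), and let α ∈ ℝ^Λ with ‖α − α₀‖₂ ≤ 1/(2·e·b·A). Then there exists θ(α) ∈ ℝ^Λ with ∫_E f_{θ(α)} ψ_λ dμ = α_λ for all λ ∈ Λ and Δ(f_{θ₀}; f_{θ(α)}) ≤ 2·e·b·‖α − α₀‖₂². -/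
/-!
The parameter `θ(α)` is a minimiser of the convex dual objective `F(θ) = ∫ f_θ dμ - ⟪α, θ⟫` over
the closed ball `‖θ - θ₀‖ ≤ 2 / A`. On that ball `|log f_θ - log f_θ₀| ≤ 2`, so
`e^w - 1 - w ≥ w² / 4` (for `w ≥ -2`), `f_θ₀ ≥ 1 / b` and orthonormality give the strong convexity
bound `Δ(f_θ₀; f_θ) ≥ ‖θ - θ₀‖² / (4b)`. As `Δ(f_θ₀; f_θ)` is the Bregman divergence of
`θ ↦ ∫ f_θ dμ`, the inequality `F(θ) ≤ F(θ₀)` reads `Δ ≤ ⟪α - α₀, θ - θ₀⟫ ≤ ‖α - α₀‖ ‖θ - θ₀‖`.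
Hence `‖θ - θ₀‖ ≤ 4b ‖α - α₀‖ < 2 / A`: the minimiser is interior, so the gradient
`∫ f_θ ψ dμ - α` of `F` vanishes there, and `Δ ≤ 4b ‖α - α₀‖² ≤ 2eb ‖α - α₀‖²`.
-/

open MeasureTheory Real Metric
open scoped RealInnerProductSpace

noncomputable section

lemma inv_exp_iSup_abs_le_exp {E : Type*} {f : E → ℝ} (hf : BddAbove (Set.range fun x => |f x|))
    (x : E) : (exp (⨆ y, |f y|))⁻¹ ≤ exp (f x) := by
  rw [← exp_neg, exp_le_exp, neg_le]
  exact (neg_le_abs (f x)).trans (le_ciSup hf x)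

lemma sq_div_four_le_exp_sub_one_sub {w : ℝ} (hw : -2 ≤ w) : w ^ 2 / 4 ≤ exp w - 1 - w := by
  -- square `0 ≤ 1 + w / 2 ≤ exp (w / 2)`
  have h := add_one_le_exp (w / 2)
  have hsq : exp (w / 2) * exp (w / 2) = exp w := by rw [← exp_add, add_halves]
  nlinarith [exp_pos (w / 2)]

namespace ExpFamily

variable {E : Type*} {Λ : Type*} [Fintype Λ] {ψ : Λ → E → ℝ}

def linComb (ψ : Λ → E → ℝ) (θ : EuclideanSpace ℝ Λ) (x : E) : ℝ := ∑ l, θ l * ψ l x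

lemma linComb_add_smul (θ v : EuclideanSpace ℝ Λ) (t : ℝ) (x : E) :
    linComb ψ (θ + t • v) x = linComb ψ θ x + t * linComb ψ v x := by
  simp only [linComb, PiLp.add_apply, PiLp.smul_apply, smul_eq_mul, add_mul,
    Finset.sum_add_distrib, Finset.mul_sum, mul_assoc]

lemma linComb_sub (θ η : EuclideanSpace ℝ Λ) (x : E) :
    linComb ψ (θ - η) x = linComb ψ θ x - linComb ψ η x := by
  simp only [linComb, PiLp.sub_apply, sub_mul, Finset.sum_sub_distrib]

lemma linComb_single [DecidableEq Λ] (l : Λ) : linComb ψ (EuclideanSpace.single l 1) = ψ l := by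
  ext x
  simp [linComb, PiLp.single_apply]

lemma abs_apply_le {A : ℝ} (hA : ∀ c x, |linComb ψ c x| ≤ A * ‖c‖) (l : Λ) (x : E) :
    |ψ l x| ≤ A := by
  classical
  simpa [linComb_single] using hA (EuclideanSpace.single l 1) x

def density (ψ : Λ → E → ℝ) (θ : EuclideanSpace ℝ Λ) (x : E) : ℝ := exp (linComb ψ θ x)

lemma density_pos (θ : EuclideanSpace ℝ Λ) (x : E) : 0 < density ψ θ x := exp_pos _

lemma density_le {A : ℝ} (hA : ∀ c x, |linComb ψ c x| ≤ A * ‖c‖) (θ : EuclideanSpace ℝ Λ)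
    (x : E) : density ψ θ x ≤ exp (A * ‖θ‖) :=
  exp_le_exp.2 (le_of_abs_le (hA θ x))

variable [MeasurableSpace E]

lemma measurable_linComb (hψ : ∀ l, Measurable (ψ l)) (θ : EuclideanSpace ℝ Λ) :
    Measurable (linComb ψ θ) :=
  Finset.measurable_sum _ fun l _ => (hψ l).const_mul _

def moment (μ : Measure E) (ψ : Λ → E → ℝ) (θ : EuclideanSpace ℝ Λ) : EuclideanSpace ℝ Λ :=
  WithLp.toLp 2 fun l => ∫ x, density ψ θ x * ψ l x ∂μ

def partitionFn (μ : Measure E) (ψ : Λ → E → ℝ) (θ : EuclideanSpace ℝ Λ) : ℝ :=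
  ∫ x, density ψ θ x ∂μ

def dualObjective (μ : Measure E) (ψ : Λ → E → ℝ) (α θ : EuclideanSpace ℝ Λ) : ℝ :=
  partitionFn μ ψ θ - ⟪α, θ⟫

def klDistance (μ : Measure E) (f g : E → ℝ) : ℝ :=
  ∫ x, (f x * log (f x / g x) - f x + g x) ∂μ

lemma measurable_density (hψ : ∀ l, Measurable (ψ l)) (θ : EuclideanSpace ℝ Λ) :
    Measurable (density ψ θ) :=
  measurable_exp.comp (measurable_linComb hψ θ)

variable {μ : Measure E}

lemma klDistance_density_eq_integral (θ₀ θ : EuclideanSpace ℝ Λ) :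
    klDistance μ (density ψ θ₀) (density ψ θ) =
      ∫ x, (density ψ θ x - density ψ θ₀ x - density ψ θ₀ x * linComb ψ (θ - θ₀) x) ∂μ := by
  refine integral_congr_ae (ae_of_all _ fun x => ?_)
  simp only [density, ← exp_sub, log_exp, linComb_sub]
  ring

variable [IsFiniteMeasure μ] {A : ℝ}

lemma integrable_density_mul (hψ : ∀ l, Measurable (ψ l))
    (hA : ∀ c x, |linComb ψ c x| ≤ A * ‖c‖) (θ : EuclideanSpace ℝ Λ) {g : E → ℝ}
    (hg : Measurable g) {C : ℝ} (hC : ∀ x, |g x| ≤ C) :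
    Integrable (fun x => density ψ θ x * g x) μ := by
  refine .of_bound ((measurable_density hψ θ).mul hg).aestronglyMeasurable
    (exp (A * ‖θ‖) * C) (ae_of_all _ fun x => ?_)
  rw [norm_mul, Real.norm_of_nonneg (density_pos θ x).le, Real.norm_eq_abs]
  exact mul_le_mul (density_le hA θ x) (hC x) (abs_nonneg _) (exp_pos _).le

lemma integrable_density (hψ : ∀ l, Measurable (ψ l))
    (hA : ∀ c x, |linComb ψ c x| ≤ A * ‖c‖) (θ : EuclideanSpace ℝ Λ) :
    Integrable (density ψ θ) μ := by
  simpa using integrable_density_mul (μ := μ) hψ hA θ (g := fun _ => 1) measurable_const (C := 1)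
    fun _ => by simp

lemma integral_density_mul_linComb (hψ : ∀ l, Measurable (ψ l))
    (hA : ∀ c x, |linComb ψ c x| ≤ A * ‖c‖) (θ v : EuclideanSpace ℝ Λ) :
    ∫ x, density ψ θ x * linComb ψ v x ∂μ = ⟪moment μ ψ θ, v⟫ := by
  have hint : ∀ l, Integrable (fun x => density ψ θ x * ψ l x) μ := fun l =>
    integrable_density_mul hψ hA θ (hψ l) (abs_apply_le hA l)
  simp only [linComb, Finset.mul_sum, mul_left_comm (density ψ θ _)]
  rw [integral_finsetSum _ fun l _ => (hint l).const_mul _]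
  simp only [integral_const_mul, moment, PiLp.inner_apply, Real.inner_apply]
  exact Finset.sum_congr rfl fun l _ => mul_comm _ _

lemma integral_linComb_sq [DecidableEq Λ] (hψ : ∀ l, Measurable (ψ l))
    (hbdd : ∀ l, ∃ C : ℝ, ∀ x, |ψ l x| ≤ C)
    (horth : ∀ l k, ∫ x, ψ l x * ψ k x ∂μ = if l = k then (1 : ℝ) else 0)
    (v : EuclideanSpace ℝ Λ) : ∫ x, linComb ψ v x ^ 2 ∂μ = ‖v‖ ^ 2 := by
  choose C hC using hbdd
  have hint : ∀ l k, Integrable (fun x => ψ l x * ψ k x) μ := fun l k =>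
    .of_bound ((hψ l).mul (hψ k)).aestronglyMeasurable (|C l| * |C k|) <| ae_of_all _ fun x => by
      rw [norm_mul, Real.norm_eq_abs, Real.norm_eq_abs]
      exact mul_le_mul ((hC l x).trans (le_abs_self _)) ((hC k x).trans (le_abs_self _))
        (abs_nonneg _) (abs_nonneg _)
  have hexpand : ∀ x, linComb ψ v x ^ 2 = ∑ l, ∑ k, v l * v k * (ψ l x * ψ k x) := fun x => by
    rw [linComb, sq, Finset.sum_mul_sum]
    exact Finset.sum_congr rfl fun l _ => Finset.sum_congr rfl fun k _ => by ring
  simp only [hexpand]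
  rw [integral_finsetSum _ fun l _ => integrable_finsetSum _ fun k _ => (hint l k).const_mul _,
    EuclideanSpace.real_norm_sq_eq]
  refine Finset.sum_congr rfl fun l _ => ?_
  rw [integral_finsetSum _ fun k _ => (hint l k).const_mul _]
  simp [integral_const_mul, horth, sq]

theorem klDistance_density_eq (hψ : ∀ l, Measurable (ψ l))
    (hA : ∀ c x, |linComb ψ c x| ≤ A * ‖c‖) (θ₀ θ : EuclideanSpace ℝ Λ) :
    klDistance μ (density ψ θ₀) (density ψ θ) =
      partitionFn μ ψ θ - partitionFn μ ψ θ₀ - ⟪moment μ ψ θ₀, θ - θ₀⟫ := by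
  have hf := integrable_density (μ := μ) hψ hA
  have hfw : Integrable (fun x => density ψ θ₀ x * linComb ψ (θ - θ₀) x) μ :=
    integrable_density_mul hψ hA θ₀ (measurable_linComb hψ _) (hA (θ - θ₀))
  rw [klDistance_density_eq_integral, integral_sub ?_ hfw, integral_sub (hf θ) (hf θ₀),
    integral_density_mul_linComb hψ hA]
  · rfl
  · exact (hf θ).sub (hf θ₀)

theorem norm_sq_div_le_klDistance [DecidableEq Λ] (hψ : ∀ l, Measurable (ψ l))
    (hA : ∀ c x, |linComb ψ c x| ≤ A * ‖c‖)
    (horth : ∀ l k, ∫ x, ψ l x * ψ k x ∂μ = if l = k then (1 : ℝ) else 0)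
    {θ₀ θ : EuclideanSpace ℝ Λ} {b : ℝ} (hb : ∀ x, b⁻¹ ≤ density ψ θ₀ x)
    (hθ : A * ‖θ - θ₀‖ ≤ 2) :
    ‖θ - θ₀‖ ^ 2 / (4 * b) ≤ klDistance μ (density ψ θ₀) (density ψ θ) := by
  set w := linComb ψ (θ - θ₀)
  have hpt : ∀ x, (4 * b)⁻¹ * w x ^ 2 ≤ density ψ θ x - density ψ θ₀ x - density ψ θ₀ x * w x := by
    intro x
    have hw : -2 ≤ w x := by linarith [neg_abs_le (w x), hA (θ - θ₀) x]
    have hθx : density ψ θ x = density ψ θ₀ x * exp (w x) := by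
      simp only [density, w, linComb_sub, ← exp_add, add_sub_cancel]
    calc (4 * b)⁻¹ * w x ^ 2 = b⁻¹ * (w x ^ 2 / 4) := by ring
      _ ≤ density ψ θ₀ x * (w x ^ 2 / 4) := mul_le_mul_of_nonneg_right (hb x) (by positivity)
      _ ≤ density ψ θ₀ x * (exp (w x) - 1 - w x) :=
        mul_le_mul_of_nonneg_left (sq_div_four_le_exp_sub_one_sub hw) (density_pos θ₀ x).le
      _ = _ := by rw [hθx]; ring
  have hw2 : Integrable (fun x => w x ^ 2) μ :=
    .of_bound ((measurable_linComb hψ _).pow_const 2).aestronglyMeasurable ((A * ‖θ - θ₀‖) ^ 2)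
      (ae_of_all _ fun x => by
        rw [Real.norm_eq_abs, abs_pow]
        exact pow_le_pow_left₀ (abs_nonneg _) (hA _ x) 2)
  have hf := integrable_density (μ := μ) hψ hA
  have hfw : Integrable (fun x => density ψ θ₀ x * w x) μ :=
    integrable_density_mul hψ hA θ₀ (measurable_linComb hψ _) (hA (θ - θ₀))
  calc ‖θ - θ₀‖ ^ 2 / (4 * b) = ∫ x, (4 * b)⁻¹ * w x ^ 2 ∂μ := by
        rw [integral_const_mul, integral_linComb_sq hψ (fun l => ⟨A, abs_apply_le hA l⟩) horth]
        ring
    _ ≤ ∫ x, (density ψ θ x - density ψ θ₀ x - density ψ θ₀ x * w x) ∂μ :=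
        integral_mono (hw2.const_mul _) (((hf θ).sub (hf θ₀)).sub hfw) hpt
    _ = klDistance μ (density ψ θ₀) (density ψ θ) := (klDistance_density_eq_integral θ₀ θ).symm

theorem klDistance_le_of_dualObjective_le (hψ : ∀ l, Measurable (ψ l))
    (hA : ∀ c x, |linComb ψ c x| ≤ A * ‖c‖) {α θ₀ θ : EuclideanSpace ℝ Λ}
    (h : dualObjective μ ψ α θ ≤ dualObjective μ ψ α θ₀) :
    klDistance μ (density ψ θ₀) (density ψ θ) ≤ ‖α - moment μ ψ θ₀‖ * ‖θ - θ₀‖ := by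
  rw [klDistance_density_eq hψ hA]
  unfold dualObjective at h
  calc _ ≤ ⟪α - moment μ ψ θ₀, θ - θ₀⟫ := by
        rw [inner_sub_left, inner_sub_right α]
        linarith
    _ ≤ _ := real_inner_le_norm _ _

lemma continuousOn_partitionFn (hψ : ∀ l, Measurable (ψ l))
    (hA : ∀ c x, |linComb ψ c x| ≤ A * ‖c‖) (c : EuclideanSpace ℝ Λ) (R : ℝ) :
    ContinuousOn (partitionFn μ ψ) (closedBall c R) := by
  refine continuousOn_of_dominated (bound := fun _ => exp (|A| * (‖c‖ + R)))
    (fun θ _ => (measurable_density hψ θ).aestronglyMeasurable)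
    (fun θ hθ => ae_of_all _ fun x => ?_)
    (integrable_const _) (ae_of_all _ fun x => Continuous.continuousOn ?_)
  · rw [Real.norm_of_nonneg (density_pos θ x).le]
    refine (density_le hA θ x).trans (exp_le_exp.2 ?_)
    exact (mul_le_mul_of_nonneg_right (le_abs_self A) (norm_nonneg θ)).trans
      (mul_le_mul_of_nonneg_left (norm_le_of_mem_closedBall hθ) (abs_nonneg A))
  · unfold density linComb
    fun_prop

lemma hasDerivAt_partitionFn_add_smul (hψ : ∀ l, Measurable (ψ l))
    (hA : ∀ c x, |linComb ψ c x| ≤ A * ‖c‖) (θ v : EuclideanSpace ℝ Λ) :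
    HasDerivAt (fun t : ℝ => partitionFn μ ψ (θ + t • v)) ⟪moment μ ψ θ, v⟫ 0 := by
  have hderiv : ∀ x t, HasDerivAt (fun t : ℝ => density ψ (θ + t • v) x)
      (density ψ (θ + t • v) x * linComb ψ v x) t := by
    intro x t
    simp only [density, linComb_add_smul]
    exact ((hasDerivAt_mul_const (linComb ψ v x)).const_add _).exp
  have hbound : ∀ x, ∀ t ∈ ball (0 : ℝ) 1,
      ‖density ψ (θ + t • v) x * linComb ψ v x‖ ≤ exp (A * ‖θ‖ + A * ‖v‖) * (A * ‖v‖) := by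
    intro x t ht
    have ht1 : |t| ≤ 1 := by simpa using (mem_ball_zero_iff.1 ht).le
    have htv : t * linComb ψ v x ≤ |linComb ψ v x| :=
      (le_abs_self _).trans (by rw [abs_mul]; exact mul_le_of_le_one_left (abs_nonneg _) ht1)
    have hexp : linComb ψ θ x + t * linComb ψ v x ≤ A * ‖θ‖ + A * ‖v‖ := by
      linarith [le_of_abs_le (hA θ x), hA v x]
    rw [norm_mul, Real.norm_of_nonneg (density_pos _ x).le, Real.norm_eq_abs, density,
      linComb_add_smul]
    exact mul_le_mul (exp_le_exp.2 hexp) (hA v x) (abs_nonneg _) (exp_pos _).le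
  obtain ⟨-, h⟩ := hasDerivAt_integral_of_dominated_loc_of_deriv_le (μ := μ)
    (ball_mem_nhds 0 one_pos) (.of_forall fun t => (measurable_density hψ _).aestronglyMeasurable)
    (integrable_density hψ hA _)
    ((measurable_density hψ _).mul (measurable_linComb hψ v)).aestronglyMeasurable
    (ae_of_all _ hbound) (integrable_const _) (ae_of_all _ fun x t _ => hderiv x t)
  rwa [zero_smul, add_zero, integral_density_mul_linComb hψ hA] at h

theorem moment_eq_of_isLocalMin (hψ : ∀ l, Measurable (ψ l))
    (hA : ∀ c x, |linComb ψ c x| ≤ A * ‖c‖) {α θ : EuclideanSpace ℝ Λ}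
    (h : IsLocalMin (dualObjective μ ψ α) θ) : moment μ ψ θ = α := by
  set v := moment μ ψ θ - α
  have hline : IsLocalMin (fun t : ℝ => dualObjective μ ψ α (θ + t • v)) 0 :=
    IsLocalMin.comp_continuous (f := dualObjective μ ψ α) (g := fun t : ℝ => θ + t • v) (b := 0)
      (by simpa using h) (by fun_prop)
  have hinner : HasDerivAt (fun t : ℝ => ⟪α, θ + t • v⟫) ⟪α, v⟫ 0 := by
    simp only [inner_add_right, inner_smul_right]
    simpa using ((hasDerivAt_id (0 : ℝ)).mul_const ⟪α, v⟫).const_add ⟪α, θ⟫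
  have hzero := hline.hasDerivAt_eq_zero ((hasDerivAt_partitionFn_add_smul hψ hA θ v).sub hinner)
  rw [← inner_sub_left, real_inner_self_eq_norm_sq, sq_eq_zero_iff, norm_eq_zero] at hzero
  exact sub_eq_zero.1 hzero

theorem exists_moment_eq_and_klDistance_le [DecidableEq Λ] (hψ : ∀ l, Measurable (ψ l))
    (hA₀ : 0 < A) (hA : ∀ c x, |linComb ψ c x| ≤ A * ‖c‖)
    (horth : ∀ l k, ∫ x, ψ l x * ψ k x ∂μ = if l = k then (1 : ℝ) else 0)
    {θ₀ α : EuclideanSpace ℝ Λ} {b : ℝ} (hb₀ : 0 < b) (hb : ∀ x, b⁻¹ ≤ density ψ θ₀ x)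
    (hα : 2 * b * A * ‖α - moment μ ψ θ₀‖ < 1) :
    ∃ θ, moment μ ψ θ = α ∧
      klDistance μ (density ψ θ₀) (density ψ θ) ≤ 4 * b * ‖α - moment μ ψ θ₀‖ ^ 2 := by
  set ε := ‖α - moment μ ψ θ₀‖
  have hr : 0 ≤ 2 / A := by positivity
  obtain ⟨θ, hθr, hmin⟩ := (isCompact_closedBall θ₀ (2 / A)).exists_isMinOn
    (f := dualObjective μ ψ α) (nonempty_closedBall.2 hr)
    ((continuousOn_partitionFn hψ hA θ₀ _).sub
      (by fun_prop : Continuous fun θ => ⟪α, θ⟫).continuousOn)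
  have hkl : klDistance μ (density ψ θ₀) (density ψ θ) ≤ ε * ‖θ - θ₀‖ :=
    klDistance_le_of_dualObjective_le hψ hA (hmin (mem_closedBall_self hr))
  have hδr : A * ‖θ - θ₀‖ ≤ 2 := by
    have := mem_closedBall_iff_norm.1 hθr
    rwa [le_div_iff₀ hA₀, mul_comm] at this
  have hδ : ‖θ - θ₀‖ ≤ 4 * b * ε := by
    have h := (norm_sq_div_le_klDistance hψ hA horth hb hδr).trans hkl
    rw [div_le_iff₀ (by positivity)] at h
    nlinarith [norm_nonneg (θ - θ₀), mul_nonneg hb₀.le (norm_nonneg (α - moment μ ψ θ₀))]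
  have hball : θ ∈ ball θ₀ (2 / A) := by
    rw [mem_ball_iff_norm, lt_div_iff₀ hA₀]
    nlinarith
  refine ⟨θ, moment_eq_of_isLocalMin hψ hA (hmin.isLocalMin (closedBall_mem_nhds_of_mem hball)), ?_⟩
  calc _ ≤ ε * ‖θ - θ₀‖ := hkl
    _ ≤ ε * (4 * b * ε) := mul_le_mul_of_nonneg_left hδ (norm_nonneg _)
    _ = 4 * b * ε ^ 2 := by ring

end ExpFamily

end

open ExpFamily

/-- Lemma 3.2, inequality (3.3): under `‖α − α₀‖₂ ≤ 1/(2·e·b·A)` there exists `θ(α)`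
satisfying the moment equations and `Δ(f_{θ₀}; f_{θ(α)}) ≤ 2·e·b·‖α − α₀‖₂²`. -/
theorem information_projection_kl_bound
    {E : Type*} [MeasurableSpace E] (μ : Measure E) [IsFiniteMeasure μ]
    {Λ : Type*} [Fintype Λ] [DecidableEq Λ] (ψ : Λ → E → ℝ)
    (hmeas : ∀ l, Measurable (ψ l))
    (hbdd : ∀ l, ∃ C : ℝ, ∀ x, |ψ l x| ≤ C)
    (horth : ∀ l k, ∫ x, ψ l x * ψ k x ∂μ = if l = k then (1 : ℝ) else 0)
    (A : ℝ) (hApos : 0 < A)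
    (hA : ∀ c : Λ → ℝ, ∀ x, |∑ l, c l * ψ l x| ≤
      A * Real.sqrt (∫ y, (∑ l, c l * ψ l y) ^ 2 ∂μ))
    (θ₀ : Λ → ℝ) (α : Λ → ℝ)
    (hclose : Real.sqrt (∑ l,
        (α l - ∫ x, Real.exp (∑ l', θ₀ l' * ψ l' x) * ψ l x ∂μ) ^ 2) ≤
      1 / (2 * Real.exp 1 * Real.exp (⨆ x, |∑ l, θ₀ l * ψ l x|) * A)) :
    ∃ θα : Λ → ℝ, (∀ l, ∫ x, Real.exp (∑ l', θα l' * ψ l' x) * ψ l x ∂μ = α l) ∧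
      ∫ x, (Real.exp (∑ l, θ₀ l * ψ l x) *
          Real.log (Real.exp (∑ l, θ₀ l * ψ l x) / Real.exp (∑ l, θα l * ψ l x)) -
          Real.exp (∑ l, θ₀ l * ψ l x) + Real.exp (∑ l, θα l * ψ l x)) ∂μ ≤
        2 * Real.exp 1 * Real.exp (⨆ x, |∑ l, θ₀ l * ψ l x|) *
          (∑ l, (α l - ∫ x, Real.exp (∑ l', θ₀ l' * ψ l' x) * ψ l x ∂μ) ^ 2) := by
  have hA' : ∀ (c : EuclideanSpace ℝ Λ) x, |linComb ψ c x| ≤ A * ‖c‖ := fun c x => by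
    have h : |linComb ψ c x| ≤ A * √(∫ y, linComb ψ c y ^ 2 ∂μ) := hA c.ofLp x
    rwa [integral_linComb_sq hmeas hbdd horth, sqrt_sq (norm_nonneg c)] at h
  set θ₀' : EuclideanSpace ℝ Λ := WithLp.toLp 2 θ₀
  set b := exp (⨆ x, |∑ l, θ₀ l * ψ l x|)
  have hb : ∀ x, b⁻¹ ≤ density ψ θ₀' x := inv_exp_iSup_abs_le_exp (f := linComb ψ θ₀')
    ⟨A * ‖θ₀'‖, by rintro _ ⟨y, rfl⟩; exact hA' θ₀' y⟩
  have hε : ‖WithLp.toLp 2 α - moment μ ψ θ₀'‖ =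
      √(∑ l, (α l - ∫ x, exp (∑ l', θ₀ l' * ψ l' x) * ψ l x ∂μ) ^ 2) := by
    simp only [EuclideanSpace.norm_eq, Real.norm_eq_abs, sq_abs]
    rfl
  have hsmall : 2 * b * A * ‖WithLp.toLp 2 α - moment μ ψ θ₀'‖ < 1 := by
    rw [← hε, le_div_iff₀ (by positivity)] at hclose
    nlinarith [add_one_lt_exp one_ne_zero, norm_nonneg (WithLp.toLp 2 α - moment μ ψ θ₀'),
      mul_pos (exp_pos _ : 0 < b) hApos]
  obtain ⟨θ, hmom, hkl⟩ :=
    exists_moment_eq_and_klDistance_le hmeas hApos hA' horth (exp_pos _) hb hsmall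
  refine ⟨θ.ofLp, fun l => congrArg (·.ofLp l) hmom, ?_⟩
  calc klDistance μ (density ψ θ₀') (density ψ θ)
      ≤ 4 * b * ‖WithLp.toLp 2 α - moment μ ψ θ₀'‖ ^ 2 := hkl
    _ ≤ 2 * exp 1 * b * ‖WithLp.toLp 2 α - moment μ ψ θ₀'‖ ^ 2 := by
      gcongr
      linarith [add_one_le_exp (1 : ℝ)]
    _ = _ := by rw [hε, sq_sqrt (Finset.sum_nonneg fun l _ => sq_nonneg _)]
end
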